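/- arXiv:2410.07052 — 6 statements merged into one kernel-verified Lean document; each statement's English description precedes it below -/
import Mathlib

section
/- Let R and R' be (possibly non-unital) associative rings and let φ : R → R' be a Jordan homomorphism. Then for all x, y ∈ R, the elements {x,y} = φ(xy) − φ(x)φ(y) and ⟨x,y⟩ = φ(xy) − φ(y)φ(x) satisfy {x,y}⟨x,y⟩ = 0 and ⟨x,y⟩{x,y} = 0. -/
/-- An additive map `φ` between (possibly non-unital) associative rings is a
Jordan homomorphism if `φ(x²) = φ(x)²` and `φ(xyx) = φ(x)φ(y)φ(x)`. -/
def IsJordanHom {R R' : Type*} [NonUnitalRing R] [NonUnitalRing R'] (φ : R → R') : Prop :=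
  (∀ x y : R, φ (x + y) = φ x + φ y) ∧
  (∀ x : R, φ (x * x) = φ x * φ x) ∧
  (∀ x y : R, φ (x * y * x) = φ x * φ y * φ x)

/-- For a Jordan homomorphism `φ`, the elements `{x,y} = φ(xy) − φ(x)φ(y)` and
`⟨x,y⟩ = φ(xy) − φ(y)φ(x)` satisfy `{x,y}⟨x,y⟩ = 0` and `⟨x,y⟩{x,y} = 0`. -/
theorem jordanHom_curly_angle_mul_eq_zero {R R' : Type*} [NonUnitalRing R] [NonUnitalRing R']
    (φ : R → R') (hφ : IsJordanHom φ) (x y : R) :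
    (φ (x * y) - φ x * φ y) * (φ (x * y) - φ y * φ x) = 0 ∧
    (φ (x * y) - φ y * φ x) * (φ (x * y) - φ x * φ y) = 0 := by
  obtain ⟨hadd, hsq, htri⟩ := hφ
  -- linearized trilinear identity
  have hlin : ∀ a b c : R, φ (a * b * c + c * b * a) =
      φ a * φ b * φ c + φ c * φ b * φ a := by
    intro a b c
    have h := htri (a + c) b
    have e1 : (a + c) * b * (a + c) = a * b * a + (a * b * c + c * b * a) + c * b * c := by
      noncomm_ring
    rw [e1, hadd, hadd, hadd, htri, htri, hadd] at h
    -- h : φ (a*b*a) ... split form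
    have h2 : φ (a * b * c) + φ (c * b * a) =
        (φ a + φ c) * φ b * (φ a + φ c) - φ a * φ b * φ a - φ c * φ b * φ c := by
      rw [← h]; abel
    rw [hadd, h2]; noncomm_ring
  set a := φ (x * y) with ha
  set b := φ x * φ y with hb
  set c := φ y * φ x with hc
  -- first key identity: a² + bc = ba + ac
  have key1 : a * a + b * c = b * a + a * c := by
    have E2 := hlin x y (x * y)
    have e : x * y * (x * y) + x * y * y * x = (x * y) * (x * y) + x * (y * y) * x := by
      noncomm_ring
    rw [e, hadd, hsq, htri, hsq] at E2
    calc a * a + b * c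
        = φ (x * y) * φ (x * y) + φ x * (φ y * φ y) * φ x := by
          simp only [ha, hb, hc]; noncomm_ring
      _ = φ x * φ y * φ (x * y) + φ (x * y) * φ y * φ x := E2
      _ = b * a + a * c := by simp only [ha, hb, hc]; noncomm_ring
  -- second key identity: a² + cb = ca + ab
  have key2 : a * a + c * b = c * a + a * b := by
    have E3 := hlin y x (x * y)
    have e : y * x * (x * y) + x * y * x * y = y * (x * x) * y + (x * y) * (x * y) := by
      noncomm_ring
    rw [e, hadd, htri, hsq, hsq] at E3
    calc a * a + c * b
        = φ y * (φ x * φ x) * φ y + φ (x * y) * φ (x * y) := by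
          simp only [ha, hb, hc]; noncomm_ring
      _ = φ y * φ x * φ (x * y) + φ (x * y) * φ x * φ y := E3
      _ = c * a + a * b := by simp only [ha, hb, hc]; noncomm_ring
  constructor
  · have h : (a - b) * (a - c) = (a * a + b * c) - (b * a + a * c) := by noncomm_ring
    rw [h, key1, sub_self]
  · have h : (a - c) * (a - b) = (a * a + c * b) - (c * a + a * b) := by noncomm_ring
    rw [h, key2, sub_self]
end

section
/- Let R and R' be (possibly non-unital) associative rings and let φ : R → R' be a Jordan homomorphism. Then φ([[x,y],z]) = [[φ(x),φ(y)],φ(z)] for all x, y, z ∈ R, where [a,b] = ab − ba. -/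
/-- A Jordan homomorphism satisfies `φ([[x,y],z]) = [[φ(x),φ(y)],φ(z)]`,
where `[a,b] = ab − ba`. -/
theorem jordanHom_double_commutator {R R' : Type*} [NonUnitalRing R] [NonUnitalRing R']
    (φ : R → R') (hφ : IsJordanHom φ) (x y z : R) :
    φ ((x * y - y * x) * z - z * (x * y - y * x)) =
      (φ x * φ y - φ y * φ x) * φ z - φ z * (φ x * φ y - φ y * φ x) := by
  obtain ⟨hadd, hsq, htri⟩ := hφ
  have h0 : φ 0 = 0 := by
    have h := hadd 0 0
    simp only [add_zero] at h
    exact left_eq_add.mp h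
  have hneg : ∀ a : R, φ (-a) = - φ a := by
    intro a
    have h := hadd a (-a)
    simp only [add_neg_cancel, h0] at h
    exact eq_neg_of_add_eq_zero_right h.symm
  have hsub : ∀ a b : R, φ (a - b) = φ a - φ b := by
    intro a b
    rw [sub_eq_add_neg, hadd, hneg, sub_eq_add_neg]
  have hk : ∀ a b c : R, φ (a * b * c + c * b * a) = φ a * φ b * φ c + φ c * φ b * φ a := by
    intro a b c
    have h := htri (a + c) b
    have e : (a + c) * b * (a + c) = a * b * a + (a * b * c + c * b * a) + c * b * c := by
      noncomm_ring
    rw [e, hadd, hadd, htri, htri] at h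
    have e' : (φ a + φ c) * φ b * (φ a + φ c) =
        φ a * φ b * φ a + (φ a * φ b * φ c + φ c * φ b * φ a) + φ c * φ b * φ c := by
      noncomm_ring
    rw [hadd a c, e'] at h
    exact add_left_cancel (add_right_cancel h)
  have e2 : (x * y - y * x) * z - z * (x * y - y * x) =
      (x * y * z + z * y * x) - (y * x * z + z * x * y) := by
    noncomm_ring
  rw [e2, hsub, hk, hk]
  noncomm_ring
end

section
/- Let φ : R → R' be a surjective Jordan homomorphism that is the sum of a homomorphism φ₁ and an antihomomorphism φ₂ on an ideal I of R. If φ₁(I) ⊆ φ(I), then φ(I) is an ideal of R' and φ is the direct sum of a homomorphism and an antihomomorphism from the ideal I onto the ideal φ(I). -/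
/-- For surjective `φ` (so that `R'_φ = R'`): `φ` is the sum of the homomorphism `φ₁`
and the antihomomorphism `φ₂` on the ideal `I` of `R`.  The maps `φ₁, φ₂` are only
constrained on `I`. -/
def IsSumHomAntihomWith {R R' : Type*} [NonUnitalRing R] [NonUnitalRing R']
    (φ φ₁ φ₂ : R → R') (I : TwoSidedIdeal R) : Prop :=
  (∀ u ∈ I, ∀ v ∈ I, φ₁ (u + v) = φ₁ u + φ₁ v) ∧
  (∀ u ∈ I, ∀ v ∈ I, φ₂ (u + v) = φ₂ u + φ₂ v) ∧
  (∀ u ∈ I, ∀ v ∈ I, φ₁ (u * v) = φ₁ u * φ₁ v) ∧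
  (∀ u ∈ I, ∀ v ∈ I, φ₂ (u * v) = φ₂ v * φ₂ u) ∧
  (∀ u ∈ I, φ u = φ₁ u + φ₂ u) ∧
  (∃ J₁ J₂ : TwoSidedIdeal R',
    (∀ u ∈ I, φ₁ u ∈ J₁) ∧ (∀ u ∈ I, φ₂ u ∈ J₂) ∧ J₁ ⊓ J₂ = ⊥) ∧
  (∀ u ∈ I, ∀ x : R, φ₁ (u * x) = φ₁ u * φ x ∧ φ₁ (x * u) = φ x * φ₁ u) ∧
  (∀ u ∈ I, ∀ x : R, φ₂ (u * x) = φ x * φ₂ u ∧ φ₂ (x * u) = φ₂ u * φ x)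

/-- For surjective `φ` (so that `R'_φ = R'`): `φ` is the direct sum of a homomorphism
and an antihomomorphism from the ideal `I` of `R` onto the ideal `J` of `R'`. -/
def IsDirectSumHomAntihomOn {R R' : Type*} [NonUnitalRing R] [NonUnitalRing R']
    (φ : R → R') (I : TwoSidedIdeal R) (J : TwoSidedIdeal R') : Prop :=
  ∃ I₁ I₂ : TwoSidedIdeal R,
    (∀ u, u ∈ I ↔ ∃ u₁ ∈ I₁, ∃ u₂ ∈ I₂, u = u₁ + u₂) ∧
    (∀ u, (u ∈ I₁ ∧ u ∈ I₂) ↔ (φ u = 0 ∧ u ∈ I)) ∧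
    (∃ J₁ J₂ : TwoSidedIdeal R',
      (J₁ : Set R') = φ '' (I₁ : Set R) ∧
      (J₂ : Set R') = φ '' (I₂ : Set R) ∧
      J₁ ⊓ J₂ = ⊥ ∧
      (∀ a, a ∈ J ↔ ∃ b ∈ J₁, ∃ c ∈ J₂, a = b + c)) ∧
    (∀ u₁ ∈ I₁, ∀ x : R, φ (u₁ * x) = φ u₁ * φ x) ∧
    (∀ u₂ ∈ I₂, ∀ x : R, φ (u₂ * x) = φ x * φ u₂)

/-- If a surjective Jordan homomorphism `φ` is the sum of a homomorphism `φ₁` and an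
antihomomorphism `φ₂` on the ideal `I`, and `φ₁(I) ⊆ φ(I)`, then `φ(I)` is an ideal
of `R'` and `φ` is the direct sum of a homomorphism and an antihomomorphism from the
ideal `I` onto the ideal `φ(I)`. -/
theorem sum_to_directSum {R R' : Type*} [NonUnitalRing R] [NonUnitalRing R']
    (φ φ₁ φ₂ : R → R') (hφ : IsJordanHom φ) (hsurj : Function.Surjective φ)
    (I : TwoSidedIdeal R) (hsum : IsSumHomAntihomWith φ φ₁ φ₂ I)
    (hsub : ∀ u ∈ I, ∃ v ∈ I, φ₁ u = φ v) :
    ∃ J : TwoSidedIdeal R', (J : Set R') = φ '' (I : Set R) ∧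
      IsDirectSumHomAntihomOn φ I J := by
  obtain ⟨hadd, _, _⟩ := hφ
  obtain ⟨_, _, _, _, hdec, ⟨J₁, J₂, hJ1, hJ2, hJdisj⟩, h1c, h2c⟩ := hsum
  -- basic additivity consequences
  have hφ0 : φ 0 = 0 := by
    have h := hadd 0 0
    rw [add_zero] at h
    exact (left_eq_add.mp h)
  have hφneg : ∀ x : R, φ (-x) = -φ x := by
    intro x
    have h := hadd x (-x)
    rw [add_neg_cancel, hφ0] at h
    exact (neg_eq_of_add_eq_zero_right h.symm).symm
  have hφsub : ∀ x y : R, φ (x - y) = φ x - φ y := by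
    intro x y
    rw [sub_eq_add_neg, hadd, hφneg, sub_eq_add_neg]
  -- φ₂ u = φ u - φ₁ u on I
  have hphi2 : ∀ u ∈ I, φ₂ u = φ u - φ₁ u := by
    intro u hu
    rw [hdec u hu]; abel
  -- disjointness consequence
  have hdisj : ∀ a : R', a ∈ J₁ → a ∈ J₂ → a = 0 := by
    intro a h1 h2
    have : a ∈ J₁ ⊓ J₂ := (TwoSidedIdeal.mem_inf _).mpr ⟨h1, h2⟩
    rw [hJdisj] at this
    exact (TwoSidedIdeal.mem_bot _).mp this
  -- key facts for members with φ u ∈ J₁ resp. J₂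
  have hkey1 : ∀ u ∈ I, φ u ∈ J₁ → φ₂ u = 0 ∧ φ₁ u = φ u := by
    intro u hu hmem
    have h2 : φ₂ u = 0 := hdisj _ (by rw [hphi2 u hu]; exact J₁.sub_mem hmem (hJ1 u hu)) (hJ2 u hu)
    refine ⟨h2, ?_⟩
    have h := hdec u hu
    rw [h2, add_zero] at h
    exact h.symm
  have hkey2 : ∀ u ∈ I, φ u ∈ J₂ → φ₁ u = 0 ∧ φ₂ u = φ u := by
    intro u hu hmem
    have h1 : φ₁ u = 0 := hdisj _ (hJ1 u hu)
      (by
        have h : φ₁ u = φ u - φ₂ u := by rw [hdec u hu]; abel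
        rw [h]; exact J₂.sub_mem hmem (hJ2 u hu))
    refine ⟨h1, ?_⟩
    have h := hdec u hu
    rw [h1, zero_add] at h
    exact h.symm
  -- images of φ₁ and φ₂ lie in φ '' I
  have himg1 : ∀ u ∈ I, φ₁ u ∈ φ '' (I : Set R) := by
    intro u hu
    obtain ⟨v, hv, hv'⟩ := hsub u hu
    exact ⟨v, hv, hv'.symm⟩
  have himg2 : ∀ u ∈ I, φ₂ u ∈ φ '' (I : Set R) := by
    intro u hu
    obtain ⟨v, hv, hv'⟩ := hsub u hu
    exact ⟨u - v, I.sub_mem hu hv, by rw [hφsub, hphi2 u hu, hv']⟩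
  have haddcl : ∀ a b : R', a ∈ φ '' (I : Set R) → b ∈ φ '' (I : Set R) →
      a + b ∈ φ '' (I : Set R) := by
    rintro _ _ ⟨u, hu, rfl⟩ ⟨v, hv, rfl⟩
    exact ⟨u + v, I.add_mem hu hv, hadd u v⟩
  -- φ '' I is closed under multiplication by arbitrary elements
  have hmull : ∀ x y : R', y ∈ φ '' (I : Set R) → x * y ∈ φ '' (I : Set R) := by
    rintro x _ ⟨u, hu, rfl⟩
    obtain ⟨z, rfl⟩ := hsurj x
    have h : φ z * φ u = φ₁ (z * u) + φ₂ (u * z) := by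
      rw [(h1c u hu z).2, (h2c u hu z).1, hdec u hu, mul_add]
    rw [h]
    exact haddcl _ _ (himg1 _ (I.mul_mem_left z u hu)) (himg2 _ (I.mul_mem_right u z hu))
  have hmulr : ∀ x y : R', x ∈ φ '' (I : Set R) → x * y ∈ φ '' (I : Set R) := by
    rintro _ y ⟨u, hu, rfl⟩
    obtain ⟨z, rfl⟩ := hsurj y
    have h : φ u * φ z = φ₁ (u * z) + φ₂ (z * u) := by
      rw [(h1c u hu z).1, (h2c u hu z).2, hdec u hu, add_mul]
    rw [h]
    exact haddcl _ _ (himg1 _ (I.mul_mem_right u z hu)) (himg2 _ (I.mul_mem_left z u hu))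
  -- closure properties packaged with implicit binders
  have hzJ : (0 : R') ∈ φ '' (I : Set R) := ⟨0, I.zero_mem, hφ0⟩
  have haddJ : ∀ {a b : R'}, a ∈ φ '' (I : Set R) → b ∈ φ '' (I : Set R) →
      a + b ∈ φ '' (I : Set R) := fun ha hb => haddcl _ _ ha hb
  have hnegJ : ∀ {a : R'}, a ∈ φ '' (I : Set R) → -a ∈ φ '' (I : Set R) := by
    rintro _ ⟨u, hu, rfl⟩; exact ⟨-u, I.neg_mem hu, hφneg u⟩
  have hmullJ : ∀ {x y : R'}, y ∈ φ '' (I : Set R) → x * y ∈ φ '' (I : Set R) :=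
    fun hy => hmull _ _ hy
  have hmulrJ : ∀ {x y : R'}, x ∈ φ '' (I : Set R) → x * y ∈ φ '' (I : Set R) :=
    fun hx => hmulr _ _ hx
  set Jid : TwoSidedIdeal R' := TwoSidedIdeal.mk' (φ '' (I : Set R))
    hzJ haddJ hnegJ hmullJ hmulrJ with hJiddef
  have hJmem : ∀ a : R', a ∈ Jid ↔ a ∈ φ '' (I : Set R) := fun a =>
    TwoSidedIdeal.mem_mk' _ _ _ _ _ _ a
  -- compute φ on products with elements of I
  have hprod1 : ∀ u ∈ I, ∀ x : R, φ (u * x) = φ₁ u * φ x + φ x * φ₂ u := by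
    intro u hu x
    rw [hdec _ (I.mul_mem_right u x hu), (h1c u hu x).1, (h2c u hu x).1]
  have hprod2 : ∀ u ∈ I, ∀ x : R, φ (x * u) = φ x * φ₁ u + φ₂ u * φ x := by
    intro u hu x
    rw [hdec _ (I.mul_mem_left x u hu), (h1c u hu x).2, (h2c u hu x).2]
  -- I₁ : elements of I with φ u ∈ J₁
  have hz1 : (0 : R) ∈ {u : R | u ∈ I ∧ φ u ∈ J₁} :=
    ⟨I.zero_mem, by rw [hφ0]; exact J₁.zero_mem⟩
  have hadd1 : ∀ {a b : R}, a ∈ {u : R | u ∈ I ∧ φ u ∈ J₁} → b ∈ {u : R | u ∈ I ∧ φ u ∈ J₁} →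
      a + b ∈ {u : R | u ∈ I ∧ φ u ∈ J₁} :=
    fun ha hb => ⟨I.add_mem ha.1 hb.1, by rw [hadd]; exact J₁.add_mem ha.2 hb.2⟩
  have hneg1 : ∀ {a : R}, a ∈ {u : R | u ∈ I ∧ φ u ∈ J₁} → -a ∈ {u : R | u ∈ I ∧ φ u ∈ J₁} :=
    fun ha => ⟨I.neg_mem ha.1, by rw [hφneg]; exact J₁.neg_mem ha.2⟩
  have hml1 : ∀ {x u : R}, u ∈ {u : R | u ∈ I ∧ φ u ∈ J₁} →
      x * u ∈ {u : R | u ∈ I ∧ φ u ∈ J₁} := by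
    intro x u hu
    refine ⟨I.mul_mem_left x u hu.1, ?_⟩
    rw [hprod2 u hu.1 x, (hkey1 u hu.1 hu.2).1, zero_mul, add_zero]
    exact J₁.mul_mem_left _ _ (hJ1 u hu.1)
  have hmr1 : ∀ {u x : R}, u ∈ {u : R | u ∈ I ∧ φ u ∈ J₁} →
      u * x ∈ {u : R | u ∈ I ∧ φ u ∈ J₁} := by
    intro u x hu
    refine ⟨I.mul_mem_right u x hu.1, ?_⟩
    rw [hprod1 u hu.1 x, (hkey1 u hu.1 hu.2).1, mul_zero, add_zero]
    exact J₁.mul_mem_right _ _ (hJ1 u hu.1)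
  set I₁ : TwoSidedIdeal R := TwoSidedIdeal.mk' {u : R | u ∈ I ∧ φ u ∈ J₁}
    hz1 hadd1 hneg1 hml1 hmr1 with hI₁def
  have hI₁mem : ∀ u : R, u ∈ I₁ ↔ u ∈ I ∧ φ u ∈ J₁ := fun u =>
    TwoSidedIdeal.mem_mk' _ _ _ _ _ _ u
  -- I₂ : elements of I with φ u ∈ J₂
  have hz2 : (0 : R) ∈ {u : R | u ∈ I ∧ φ u ∈ J₂} :=
    ⟨I.zero_mem, by rw [hφ0]; exact J₂.zero_mem⟩
  have hadd2 : ∀ {a b : R}, a ∈ {u : R | u ∈ I ∧ φ u ∈ J₂} → b ∈ {u : R | u ∈ I ∧ φ u ∈ J₂} →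
      a + b ∈ {u : R | u ∈ I ∧ φ u ∈ J₂} :=
    fun ha hb => ⟨I.add_mem ha.1 hb.1, by rw [hadd]; exact J₂.add_mem ha.2 hb.2⟩
  have hneg2 : ∀ {a : R}, a ∈ {u : R | u ∈ I ∧ φ u ∈ J₂} → -a ∈ {u : R | u ∈ I ∧ φ u ∈ J₂} :=
    fun ha => ⟨I.neg_mem ha.1, by rw [hφneg]; exact J₂.neg_mem ha.2⟩
  have hml2 : ∀ {x u : R}, u ∈ {u : R | u ∈ I ∧ φ u ∈ J₂} →
      x * u ∈ {u : R | u ∈ I ∧ φ u ∈ J₂} := by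
    intro x u hu
    refine ⟨I.mul_mem_left x u hu.1, ?_⟩
    rw [hprod2 u hu.1 x, (hkey2 u hu.1 hu.2).1, mul_zero, zero_add]
    exact J₂.mul_mem_right _ _ (hJ2 u hu.1)
  have hmr2 : ∀ {u x : R}, u ∈ {u : R | u ∈ I ∧ φ u ∈ J₂} →
      u * x ∈ {u : R | u ∈ I ∧ φ u ∈ J₂} := by
    intro u x hu
    refine ⟨I.mul_mem_right u x hu.1, ?_⟩
    rw [hprod1 u hu.1 x, (hkey2 u hu.1 hu.2).1, zero_mul, zero_add]
    exact J₂.mul_mem_left _ _ (hJ2 u hu.1)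
  set I₂ : TwoSidedIdeal R := TwoSidedIdeal.mk' {u : R | u ∈ I ∧ φ u ∈ J₂}
    hz2 hadd2 hneg2 hml2 hmr2 with hI₂def
  have hI₂mem : ∀ u : R, u ∈ I₂ ↔ u ∈ I ∧ φ u ∈ J₂ := fun u =>
    TwoSidedIdeal.mem_mk' _ _ _ _ _ _ u
  refine ⟨Jid, TwoSidedIdeal.coe_mk' _ _ _ _ _ _, I₁, I₂, ?_, ?_, ?_, ?_, ?_⟩
  · -- I = I₁ + I₂
    intro u
    constructor
    · intro hu
      obtain ⟨v, hv, hv'⟩ := hsub u hu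
      refine ⟨v, (hI₁mem v).mpr ⟨hv, by rw [← hv']; exact hJ1 u hu⟩,
        u - v, (hI₂mem (u - v)).mpr
          ⟨I.sub_mem hu hv, by rw [hφsub, ← hv', ← hphi2 u hu]; exact hJ2 u hu⟩, by abel⟩
    · rintro ⟨u₁, h1, u₂, h2, rfl⟩
      exact I.add_mem ((hI₁mem u₁).mp h1).1 ((hI₂mem u₂).mp h2).1
  · -- intersection is the kernel on I
    intro u
    rw [hI₁mem, hI₂mem]
    constructor
    · rintro ⟨⟨hu, h1⟩, _, h2⟩
      exact ⟨hdisj _ h1 h2, hu⟩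
    · rintro ⟨h0, hu⟩
      exact ⟨⟨hu, by rw [h0]; exact J₁.zero_mem⟩, ⟨hu, by rw [h0]; exact J₂.zero_mem⟩⟩
  · -- the ideals J₁' = J ⊓ J₁ and J₂' = J ⊓ J₂
    refine ⟨Jid ⊓ J₁, Jid ⊓ J₂, ?_, ?_, ?_, ?_⟩
    · ext a
      simp only [SetLike.mem_coe, TwoSidedIdeal.mem_inf, hJmem]
      constructor
      · rintro ⟨⟨u, hu, rfl⟩, h1⟩
        exact ⟨u, (hI₁mem u).mpr ⟨hu, h1⟩, rfl⟩
      · rintro ⟨u, hu, rfl⟩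
        obtain ⟨hu, h1⟩ := (hI₁mem u).mp hu
        exact ⟨⟨u, hu, rfl⟩, h1⟩
    · ext a
      simp only [SetLike.mem_coe, TwoSidedIdeal.mem_inf, hJmem]
      constructor
      · rintro ⟨⟨u, hu, rfl⟩, h2⟩
        exact ⟨u, (hI₂mem u).mpr ⟨hu, h2⟩, rfl⟩
      · rintro ⟨u, hu, rfl⟩
        obtain ⟨hu, h2⟩ := (hI₂mem u).mp hu
        exact ⟨⟨u, hu, rfl⟩, h2⟩
    · -- disjointness
      refine TwoSidedIdeal.ext fun a => ?_
      rw [TwoSidedIdeal.mem_inf, TwoSidedIdeal.mem_inf, TwoSidedIdeal.mem_inf,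
        TwoSidedIdeal.mem_bot]
      constructor
      · rintro ⟨⟨_, h1⟩, _, h2⟩
        exact hdisj a h1 h2
      · rintro rfl
        exact ⟨⟨(hJmem 0).mpr hzJ, J₁.zero_mem⟩, (hJmem 0).mpr hzJ, J₂.zero_mem⟩
    · -- decomposition of J
      intro a
      constructor
      · intro ha
        obtain ⟨u, hu, rfl⟩ := (hJmem a).mp ha
        refine ⟨φ₁ u, (TwoSidedIdeal.mem_inf _).mpr ⟨(hJmem _).mpr (himg1 u hu), hJ1 u hu⟩,
          φ₂ u, (TwoSidedIdeal.mem_inf _).mpr ⟨(hJmem _).mpr (himg2 u hu), hJ2 u hu⟩,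
          hdec u hu⟩
      · rintro ⟨b, hb, c, hc, rfl⟩
        exact Jid.add_mem ((TwoSidedIdeal.mem_inf _).mp hb).1 ((TwoSidedIdeal.mem_inf _).mp hc).1
  · -- multiplicativity on I₁
    intro u₁ h1 x
    obtain ⟨hu, hm⟩ := (hI₁mem u₁).mp h1
    rw [hprod1 u₁ hu x, (hkey1 u₁ hu hm).1, (hkey1 u₁ hu hm).2, mul_zero, add_zero]
  · -- antimultiplicativity on I₂
    intro u₂ h2 x
    obtain ⟨hu, hm⟩ := (hI₂mem u₂).mp h2
    rw [hprod1 u₂ hu x, (hkey2 u₂ hu hm).1, (hkey2 u₂ hu hm).2, zero_mul, zero_add]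
end

section
/- Let R be a (possibly non-unital) ring, R' a reduced ring, and f, g : R → R' additive maps satisfying f(x)g(x) = 0 and g(x)f(x) = 0 for all x ∈ R. Then f(x)g(z) = 0 and g(z)f(x) = 0 for all x, z ∈ R. -/
/-- Let `R'` be a reduced ring (no nonzero nilpotents; for associative rings this is
equivalent to: `x² = 0` implies `x = 0`).  If `f, g : R → R'` are additive maps with
`f(x)g(x) = 0 = g(x)f(x)` for all `x`, then `f(x)g(z) = 0 = g(z)f(x)` for all `x, z`. -/
theorem additive_orthogonal_of_reduced {R R' : Type*} [NonUnitalRing R] [NonUnitalRing R']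
    (hred : ∀ a : R', a * a = 0 → a = 0)
    (f g : R → R')
    (hf : ∀ x y : R, f (x + y) = f x + f y)
    (hg : ∀ x y : R, g (x + y) = g x + g y)
    (h : ∀ x : R, f x * g x = 0 ∧ g x * f x = 0) :
    ∀ x z : R, f x * g z = 0 ∧ g z * f x = 0 := by
  intro x z
  have h1 : f x * g z + f z * g x = 0 := by
    have := (h (x + z)).1
    rw [hf, hg] at this
    have hx := (h x).1
    have hz := (h z).1
    rw [add_mul, mul_add, mul_add, hx, hz] at this
    simpa using this
  have h2 : g z * f x + g x * f z = 0 := by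
    have := (h (x + z)).2
    rw [hf, hg] at this
    have hx := (h x).2
    have hz := (h z).2
    rw [add_mul, mul_add, mul_add, hx, hz] at this
    simpa [add_comm] using this
  have ha : f x * g z = 0 := by
    apply hred
    have e1 : g z * f x = -(g x * f z) := eq_neg_of_add_eq_zero_left h2
    calc f x * g z * (f x * g z) = f x * (g z * f x) * g z := by noncomm_ring
      _ = -(f x * g x * (f z * g z)) := by rw [e1]; noncomm_ring
      _ = 0 := by rw [(h x).1, zero_mul, neg_zero]
  refine ⟨ha, hred _ ?_⟩
  calc g z * f x * (g z * f x) = g z * (f x * g z) * f x := by noncomm_ring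
    _ = 0 := by rw [ha, mul_zero, zero_mul]
end

section
/- Let φ : R → R' be a surjective Jordan homomorphism. If the commutator ideal K of R is a direct summand of R (there exists an ideal C of R with K + C = R and K ∩ C = {0}) and R' is a 2-torsion free semiprime ring, then φ is the direct sum of a homomorphism and an antihomomorphism from the ideal R onto the ideal R'. -/
/-- The commutator ideal of `R`: the two-sided ideal generated by all `xy − yx`. -/
def commutatorIdeal (R : Type*) [NonUnitalRing R] : TwoSidedIdeal R :=
  TwoSidedIdeal.span {z : R | ∃ x y : R, z = x * y - y * x}

/-- A ring is semiprime if `I² = {0}` implies `I = {0}` for every (two-sided) ideal `I`. -/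
def IsSemiprimeRing (A : Type*) [NonUnitalRing A] : Prop :=
  ∀ I : TwoSidedIdeal A, (∀ x ∈ I, ∀ y ∈ I, x * y = 0) → I = ⊥

/-!
Write `E(x,y) = φ(xy) - φ(x)φ(y)` and `D(x,y) = φ(xy) - φ(y)φ(x)`. Linearizing the Jordan
identities gives Herstein's identity `E c D + D c E = 0` for all `c ∈ R'`, and in a 2-torsion free
semiprime ring this polarizes to `E(x,y) R' D(u,v) = 0 = D(u,v) R' E(x,y)`. Let `J₁` be the ideal of
`a ∈ R'` with `E R' a = 0 = a R' E` for all defects `E`, and `J₂` the same annihilator of `J₁`.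
Semiprimeness gives `J₁ ∩ J₂ = 0`; `φ` is multiplicative over `J₁` and antimultiplicative over
`J₂`, while all `D` lie in `J₁` and all `E` in `J₂`. So `φ(xy - yx) = D(x,y) + E(x,y) ∈ J₁ + J₂`,
and since `φ(zx) = φ(z)φ(x) + E(z,x)` the preimage of `J₁ + J₂` is an ideal, so it contains the
commutator ideal `K`. The complement `C` is central (`[C, R] ⊆ K ∩ C = 0`), which forces
`φ(C) ⊆ J₁`. Hence `J₁ + J₂ = R'`, and the preimages of `J₁` and `J₂` are the two summands.
-/

namespace TwoSidedIdeal

variable {A : Type*} [NonUnitalRing A]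

def leftAnnihilator (I : TwoSidedIdeal A) : TwoSidedIdeal A :=
  mk' {v | ∀ w ∈ I, v * w = 0}
    (fun w _ => zero_mul w)
    (fun hv hv' w hw => by rw [add_mul, hv w hw, hv' w hw, add_zero])
    (fun hv w hw => by rw [neg_mul, hv w hw, neg_zero])
    (fun {r v} hv w hw => by rw [mul_assoc, hv w hw, mul_zero])
    (fun {v r} hv w hw => by rw [mul_assoc]; exact hv _ (I.mul_mem_left r w hw))

lemma mem_leftAnnihilator {I : TwoSidedIdeal A} {v : A} :
    v ∈ I.leftAnnihilator ↔ ∀ w ∈ I, v * w = 0 :=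
  mem_mk' ..

def sandwichAnnihilator (S : Set A) : TwoSidedIdeal A :=
  mk' {v | ∀ s ∈ S, ∀ m, s * m * v = 0 ∧ v * m * s = 0}
    (fun s _ m => ⟨mul_zero _, by rw [zero_mul, zero_mul]⟩)
    (fun hv hv' s hs m => ⟨by rw [mul_add, (hv s hs m).1, (hv' s hs m).1, add_zero],
      by rw [add_mul, add_mul, (hv s hs m).2, (hv' s hs m).2, add_zero]⟩)
    (fun hv s hs m => ⟨by rw [mul_neg, (hv s hs m).1, neg_zero],
      by rw [neg_mul, neg_mul, (hv s hs m).2, neg_zero]⟩)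
    (fun {r v} hv s hs m => ⟨by rw [← mul_assoc, mul_assoc s, (hv s hs _).1],
      by rw [mul_assoc r, mul_assoc r, (hv s hs m).2, mul_zero]⟩)
    (fun {v r} hv s hs m => ⟨by rw [← mul_assoc, (hv s hs m).1, zero_mul],
      by rw [mul_assoc v, (hv s hs _).2]⟩)

lemma mem_sandwichAnnihilator {S : Set A} {v : A} :
    v ∈ sandwichAnnihilator S ↔ ∀ s ∈ S, ∀ m, s * m * v = 0 ∧ v * m * s = 0 :=
  mem_mk' ..

section Comap

variable {R R' : Type*} [NonUnitalRing R] [NonUnitalRing R']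

def comapOfMulMem (φ : R →+ R') (J : TwoSidedIdeal R')
    (hJ : ∀ u, φ u ∈ J → ∀ x, φ (x * u) ∈ J ∧ φ (u * x) ∈ J) : TwoSidedIdeal R :=
  mk' (φ ⁻¹' J) (by simp [J.zero_mem])
    (fun hx hy => by simpa using J.add_mem hx hy) (fun hx => by simpa using J.neg_mem hx)
    (fun hy => (hJ _ hy _).1) (fun hx => (hJ _ hx _).2)

lemma coe_comapOfMulMem (φ : R →+ R') (J : TwoSidedIdeal R') (hJ) :
    (comapOfMulMem φ J hJ : Set R) = φ ⁻¹' J :=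
  coe_mk' ..

lemma mem_comapOfMulMem {φ : R →+ R'} {J : TwoSidedIdeal R'} {hJ} {u : R} :
    u ∈ comapOfMulMem φ J hJ ↔ φ u ∈ J :=
  mem_mk' ..

end Comap

end TwoSidedIdeal

open TwoSidedIdeal

namespace IsSemiprimeRing

variable {A : Type*} [NonUnitalRing A]

lemma inf_leftAnnihilator_eq_bot (hA : IsSemiprimeRing A) (I : TwoSidedIdeal A) :
    I ⊓ I.leftAnnihilator = ⊥ :=
  hA _ fun _ hx y hy =>
    mem_leftAnnihilator.mp ((mem_inf _).mp hx).2 y ((mem_inf _).mp hy).1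

lemma eq_bot_of_mul_mul_eq_zero (hA : IsSemiprimeRing A) {I : TwoSidedIdeal A}
    (hI : ∀ x ∈ I, ∀ m, ∀ y ∈ I, x * m * y = 0) : I = ⊥ := by
  have hmul : ∀ x ∈ I, ∀ y ∈ I, x * y = 0 := fun x hx y hy => by
    have hxy : x * y ∈ I ⊓ I.leftAnnihilator :=
      (mem_inf _).mpr ⟨I.mul_mem_right x y hx,
        mem_leftAnnihilator.mpr fun z hz => hI x hx y z hz⟩
    rwa [inf_leftAnnihilator_eq_bot hA, mem_bot] at hxy
  exact hA I hmul

lemma eq_zero_of_forall_mul_mul_eq_zero (hA : IsSemiprimeRing A) {a : A}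
    (ha : ∀ m, a * m * a = 0) : a = 0 := by
  have hspan : span {a} ≤ sandwichAnnihilator {a} :=
    span_le.mpr fun _ h => mem_sandwichAnnihilator.mpr fun _ hs m => by
      rw [Set.mem_singleton_iff.mp h, Set.mem_singleton_iff.mp hs]; exact ⟨ha m, ha m⟩
  have ha' : a ∈ sandwichAnnihilator (span {a} : Set A) :=
    mem_sandwichAnnihilator.mpr fun w hw m =>
      (mem_sandwichAnnihilator.mp (hspan hw) a rfl m).symm
  have hbot : span {a} = ⊥ := hA.eq_bot_of_mul_mul_eq_zero fun x hx m y hy =>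
    (mem_sandwichAnnihilator.mp (span_le.mpr (Set.singleton_subset_iff.mpr ha') hy) x hx m).1
  rw [← mem_bot, ← hbot]
  exact subset_span rfl

lemma inf_sandwichAnnihilator_eq_bot (hA : IsSemiprimeRing A) (I : TwoSidedIdeal A) :
    I ⊓ sandwichAnnihilator (I : Set A) = ⊥ := by
  refine eq_bot_iff.mpr fun t ht => (mem_bot _).mpr ?_
  obtain ⟨htI, htAnn⟩ := (mem_inf _).mp ht
  exact hA.eq_zero_of_forall_mul_mul_eq_zero fun m =>
    (mem_sandwichAnnihilator.mp htAnn t htI m).1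

lemma mul_mul_eq_zero_of_add_mul_mul_eq_zero (hA : IsSemiprimeRing A)
    (htf : ∀ x : A, x + x = 0 → x = 0) {a b : A} (h : ∀ m, a * m * b + b * m * a = 0)
    (n : A) : a * n * b = 0 := by
  have hswap : ∀ m, b * m * a = -(a * m * b) := fun m => eq_neg_of_add_eq_zero_right (h m)
  refine hA.eq_zero_of_forall_mul_mul_eq_zero fun m => htf _ (add_eq_zero_iff_eq_neg.mpr ?_)
  calc a * n * b * m * (a * n * b) = a * n * (b * m * a) * n * b := by noncomm_ring
    _ = -(a * n * (a * (m * b * n) * b)) := by rw [hswap]; noncomm_ring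
    _ = a * n * (b * (m * b * n) * a) := by rw [hswap]; noncomm_ring
    _ = a * n * b * m * (b * n * a) := by noncomm_ring
    _ = -(a * n * b * m * (a * n * b)) := by rw [hswap]; noncomm_ring

lemma apply_mul_mul_apply_eq_zero_of_diagonal {M : Type*} [Add M]
    (hA : IsSemiprimeRing A) {f g : M → A} (hf : ∀ x u, f (x + u) = f x + f u)
    (hg : ∀ x u, g (x + u) = g x + g u) (hfg : ∀ x m, f x * m * g x = 0)
    (hgf : ∀ x m, g x * m * f x = 0) (x u : M) (c : A) : f x * c * g u = 0 := by
  have hpolar : ∀ x u m, g u * m * f x = -(g x * m * f u) := fun x u m => by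
    have h := hgf (u + x) m
    rw [hg, hf] at h
    simp only [add_mul, mul_add, hgf, zero_add, add_zero] at h
    exact eq_neg_of_add_eq_zero_right h
  refine hA.eq_zero_of_forall_mul_mul_eq_zero fun m => ?_
  calc f x * c * g u * m * (f x * c * g u) = f x * c * (g u * m * f x) * c * g u := by
        noncomm_ring
    _ = -(f x * c * g x * m * (f u * c * g u)) := by
        rw [hpolar]; noncomm_ring
    _ = 0 := by rw [hfg, zero_mul, zero_mul, neg_zero]

end IsSemiprimeRing

section Defects

variable {R R' : Type*} [NonUnitalRing R] [NonUnitalRing R']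

def homDefect (φ : R → R') (x y : R) : R' :=
  φ (x * y) - φ x * φ y

def antihomDefect (φ : R → R') (x y : R) : R' :=
  φ (x * y) - φ y * φ x

/-- `homPart φ` and `antihomPart φ` are the ideals `J₁` and `J₂` of the sketch above. -/
def homPart (φ : R → R') : TwoSidedIdeal R' :=
  sandwichAnnihilator (Set.range fun p : R × R => homDefect φ p.1 p.2)

def antihomPart (φ : R → R') : TwoSidedIdeal R' :=
  sandwichAnnihilator (homPart φ : Set R')

lemma homDefect_mem_antihomPart (φ : R → R') (x y : R) : homDefect φ x y ∈ antihomPart φ :=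
  mem_sandwichAnnihilator.mpr fun _ hw m =>
    (mem_sandwichAnnihilator.mp hw _ ⟨(x, y), rfl⟩ m).symm

lemma homPart_inf_antihomPart {φ : R → R'} (hsp : IsSemiprimeRing R') :
    homPart φ ⊓ antihomPart φ = ⊥ :=
  hsp.inf_sandwichAnnihilator_eq_bot _

end Defects

namespace IsJordanHom

variable {R R' : Type*} [NonUnitalRing R] [NonUnitalRing R'] {φ : R → R'}

lemma map_add (hφ : IsJordanHom φ) (x y : R) : φ (x + y) = φ x + φ y := hφ.1 x y

lemma map_sub (hφ : IsJordanHom φ) (x y : R) : φ (x - y) = φ x - φ y :=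
  (AddMonoidHom.mk' φ hφ.1).map_sub x y

lemma map_mul_add_mul (hφ : IsJordanHom φ) (x y : R) :
    φ (x * y + y * x) = φ x * φ y + φ y * φ x := by
  have h := hφ.2.1 (x + y)
  rw [show (x + y) * (x + y) = x * x + (x * y + y * x) + y * y by noncomm_ring] at h
  simp only [hφ.map_add, hφ.2.1] at h ⊢
  rw [show (φ x + φ y) * (φ x + φ y) = φ x * φ x + (φ x * φ y + φ y * φ x) + φ y * φ y by
    noncomm_ring] at h
  exact add_left_cancel (add_right_cancel h)

lemma map_mul_mul_add_mul_mul (hφ : IsJordanHom φ) (x y z : R) :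
    φ (x * z * y + y * z * x) = φ x * φ z * φ y + φ y * φ z * φ x := by
  have h := hφ.2.2 (x + y) z
  rw [show (x + y) * z * (x + y) = x * z * x + (x * z * y + y * z * x) + y * z * y by
    noncomm_ring] at h
  simp only [hφ.map_add, hφ.2.2] at h ⊢
  rw [show (φ x + φ y) * φ z * (φ x + φ y)
    = φ x * φ z * φ x + (φ x * φ z * φ y + φ y * φ z * φ x) + φ y * φ z * φ y by
    noncomm_ring] at h
  exact add_left_cancel (add_right_cancel h)

lemma homDefect_add_left (hφ : IsJordanHom φ) (x u y : R) :
    homDefect φ (x + u) y = homDefect φ x y + homDefect φ u y := by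
  simp only [homDefect, add_mul, hφ.map_add]; abel

lemma homDefect_add_right (hφ : IsJordanHom φ) (x y v : R) :
    homDefect φ x (y + v) = homDefect φ x y + homDefect φ x v := by
  simp only [homDefect, mul_add, hφ.map_add]; abel

lemma antihomDefect_add_left (hφ : IsJordanHom φ) (x u y : R) :
    antihomDefect φ (x + u) y = antihomDefect φ x y + antihomDefect φ u y := by
  simp only [antihomDefect, add_mul, mul_add, hφ.map_add]; abel

lemma antihomDefect_add_right (hφ : IsJordanHom φ) (x y v : R) :
    antihomDefect φ x (y + v) = antihomDefect φ x y + antihomDefect φ x v := by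
  simp only [antihomDefect, add_mul, mul_add, hφ.map_add]; abel

lemma homDefect_swap (hφ : IsJordanHom φ) (x y : R) : homDefect φ y x = -homDefect φ x y := by
  have h := hφ.map_mul_add_mul x y
  rw [hφ.map_add] at h
  rw [homDefect, homDefect, eq_sub_of_add_eq' h]; abel

lemma antihomDefect_swap (hφ : IsJordanHom φ) (x y : R) :
    antihomDefect φ y x = -antihomDefect φ x y := by
  have h := hφ.map_mul_add_mul x y
  rw [hφ.map_add] at h
  rw [antihomDefect, antihomDefect, eq_sub_of_add_eq' h]; abel

/-- Herstein's identity, obtained by linearizing `φ(xyx) = φ(x)φ(y)φ(x)` at the pair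
`xy`, `yx`. -/
lemma homDefect_mul_mul_antihomDefect_add (hφ : IsJordanHom φ) (hsurj : Function.Surjective φ)
    (x y : R) (c : R') :
    homDefect φ x y * c * antihomDefect φ x y + antihomDefect φ x y * c * homDefect φ x y
      = 0 := by
  obtain ⟨z, rfl⟩ := hsurj c
  have hst := hφ.map_mul_mul_add_mul_mul (x * y) (y * x) z
  rw [show x * y * z * (y * x) = x * (y * z * y) * x by noncomm_ring,
    show y * x * z * (x * y) = y * (x * z * x) * y by noncomm_ring] at hst
  simp only [hφ.map_add, hφ.2.2] at hst
  have hxy : φ (x * y) = φ x * φ y + homDefect φ x y := (add_sub_cancel _ _).symm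
  have hyx : φ (y * x) = φ y * φ x - homDefect φ x y := by
    rw [← neg_neg (homDefect φ x y), ← hφ.homDefect_swap, homDefect]; abel
  have hD : antihomDefect φ x y = φ x * φ y + homDefect φ x y - φ y * φ x := by
    rw [antihomDefect, ← hxy]
  rw [hxy, hyx, ← sub_eq_zero] at hst
  rw [hD, ← hst]
  noncomm_ring

lemma homDefect_mul_mul_antihomDefect (hφ : IsJordanHom φ) (hsurj : Function.Surjective φ)
    (hsp : IsSemiprimeRing R') (htf : ∀ a : R', a + a = 0 → a = 0) (x y u v : R) (m : R') :
    homDefect φ x y * m * antihomDefect φ u v = 0 ∧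
      antihomDefect φ u v * m * homDefect φ x y = 0 := by
  have hdiag : ∀ x y m, homDefect φ x y * m * antihomDefect φ x y = 0 := fun x y =>
    hsp.mul_mul_eq_zero_of_add_mul_mul_eq_zero htf
      (hφ.homDefect_mul_mul_antihomDefect_add hsurj x y)
  have hdiag' : ∀ x y m, antihomDefect φ x y * m * homDefect φ x y = 0 := fun x y m => by
    have h := hφ.homDefect_mul_mul_antihomDefect_add hsurj x y m
    rwa [hdiag, zero_add] at h
  have hleft : ∀ y x u m, homDefect φ x y * m * antihomDefect φ u y = 0 ∧
      antihomDefect φ x y * m * homDefect φ u y = 0 := fun y x u m =>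
    ⟨hsp.apply_mul_mul_apply_eq_zero_of_diagonal (hφ.homDefect_add_left · · y)
        (hφ.antihomDefect_add_left · · y) (hdiag · y) (hdiag' · y) x u m,
      hsp.apply_mul_mul_apply_eq_zero_of_diagonal (hφ.antihomDefect_add_left · · y)
        (hφ.homDefect_add_left · · y) (hdiag' · y) (hdiag · y) x u m⟩
  exact ⟨hsp.apply_mul_mul_apply_eq_zero_of_diagonal (hφ.homDefect_add_right x)
      (hφ.antihomDefect_add_right u) (fun y m => (hleft y x u m).1)
      (fun y m => (hleft y u x m).2) y v m,
    hsp.apply_mul_mul_apply_eq_zero_of_diagonal (hφ.antihomDefect_add_right u)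
      (hφ.homDefect_add_right x) (fun y m => (hleft y u x m).2)
      (fun y m => (hleft y x u m).1) v y m⟩

lemma antihomDefect_mem_homPart (hφ : IsJordanHom φ) (hsurj : Function.Surjective φ)
    (hsp : IsSemiprimeRing R') (htf : ∀ a : R', a + a = 0 → a = 0) (u v : R) :
    antihomDefect φ u v ∈ homPart φ :=
  mem_sandwichAnnihilator.mpr fun _ ⟨(x, y), hxy⟩ m =>
    hxy ▸ hφ.homDefect_mul_mul_antihomDefect hsurj hsp htf x y u v m

lemma map_mul_of_mem_homPart (hφ : IsJordanHom φ) (hsurj : Function.Surjective φ)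
    (hsp : IsSemiprimeRing R') (htf : ∀ a : R', a + a = 0 → a = 0) {u : R}
    (hu : φ u ∈ homPart φ) (x : R) : φ (u * x) = φ u * φ x ∧ φ (x * u) = φ x * φ u := by
  have hu' : ∀ m, homDefect φ u x * m * φ u = 0 := fun m =>
    (mem_sandwichAnnihilator.mp hu _ ⟨(u, x), rfl⟩ m).1
  have hE : homDefect φ u x = 0 := hsp.eq_zero_of_forall_mul_mul_eq_zero fun m => by
    have hD : antihomDefect φ u x = homDefect φ u x + φ u * φ x - φ x * φ u := by
      rw [homDefect, antihomDefect]; abel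
    calc homDefect φ u x * m * homDefect φ u x
        = homDefect φ u x * m * antihomDefect φ u x - homDefect φ u x * m * φ u * φ x
          + homDefect φ u x * (m * φ x) * φ u := by rw [hD]; noncomm_ring
      _ = 0 := by
        rw [(hφ.homDefect_mul_mul_antihomDefect hsurj hsp htf u x u x m).1, hu', hu']
        noncomm_ring
  have hE' := hφ.homDefect_swap u x
  rw [hE, neg_zero] at hE'
  exact ⟨sub_eq_zero.mp hE, sub_eq_zero.mp hE'⟩

lemma map_mul_of_mem_antihomPart (hφ : IsJordanHom φ) (hsurj : Function.Surjective φ)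
    (hsp : IsSemiprimeRing R') (htf : ∀ a : R', a + a = 0 → a = 0) {u : R}
    (hu : φ u ∈ antihomPart φ) (x : R) : φ (u * x) = φ x * φ u ∧ φ (x * u) = φ u * φ x := by
  have hu' : ∀ m, antihomDefect φ u x * m * φ u = 0 := fun m =>
    (mem_sandwichAnnihilator.mp hu _ (hφ.antihomDefect_mem_homPart hsurj hsp htf u x) m).1
  have hD : antihomDefect φ u x = 0 := hsp.eq_zero_of_forall_mul_mul_eq_zero fun m => by
    have hE : homDefect φ u x = antihomDefect φ u x + φ x * φ u - φ u * φ x := by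
      rw [homDefect, antihomDefect]; abel
    calc antihomDefect φ u x * m * antihomDefect φ u x
        = antihomDefect φ u x * m * homDefect φ u x - antihomDefect φ u x * (m * φ x) * φ u
          + antihomDefect φ u x * m * φ u * φ x := by rw [hE]; noncomm_ring
      _ = 0 := by
        rw [(hφ.homDefect_mul_mul_antihomDefect hsurj hsp htf u x u x m).2, hu', hu']
        noncomm_ring
  have hD' := hφ.antihomDefect_swap u x
  rw [hD, neg_zero] at hD'
  exact ⟨sub_eq_zero.mp hD, sub_eq_zero.mp hD'⟩

lemma map_mul_of_forall_mul_comm (hφ : IsJordanHom φ) (hsurj : Function.Surjective φ)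
    (hsp : IsSemiprimeRing R') (htf : ∀ a : R', a + a = 0 → a = 0) {c : R}
    (hc : ∀ x, c * x = x * c) (x : R) : φ (c * x) = φ c * φ x ∧ φ (c * x) = φ x * φ c := by
  have hsum : homDefect φ c x + antihomDefect φ c x = 0 := by
    have h := hφ.map_mul_add_mul c x
    rw [← hc x, hφ.map_add] at h
    calc homDefect φ c x + antihomDefect φ c x
        = (φ (c * x) + φ (c * x)) - (φ c * φ x + φ x * φ c) := by
          rw [homDefect, antihomDefect]; abel
      _ = 0 := by rw [h, sub_self]
  have hD := eq_neg_of_add_eq_zero_right hsum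
  have hE : homDefect φ c x = 0 := hsp.eq_zero_of_forall_mul_mul_eq_zero fun m => by
    have h := (hφ.homDefect_mul_mul_antihomDefect hsurj hsp htf c x c x m).1
    rwa [hD, mul_neg, neg_eq_zero] at h
  rw [hE, neg_zero] at hD
  exact ⟨sub_eq_zero.mp hE, sub_eq_zero.mp hD⟩

/-- `φ c` is central, and `φ c * homDefect φ x y = homDefect φ (c * x) y = 0`. -/
lemma map_mem_homPart_of_central (hφ : IsJordanHom φ) (hsurj : Function.Surjective φ)
    (hsp : IsSemiprimeRing R') (htf : ∀ a : R', a + a = 0 → a = 0) {C : TwoSidedIdeal R}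
    (hC : ∀ c ∈ C, ∀ x, c * x = x * c) {c : R} (hc : c ∈ C) : φ c ∈ homPart φ := by
  have hmul : ∀ c ∈ C, ∀ x, φ (c * x) = φ c * φ x ∧ φ (c * x) = φ x * φ c :=
    fun c hc => hφ.map_mul_of_forall_mul_comm hsurj hsp htf (hC c hc)
  have hcomm : ∀ w : R', φ c * w = w * φ c := fun w => by
    obtain ⟨x, rfl⟩ := hsurj w
    rw [← (hmul c hc x).1, (hmul c hc x).2]
  have hkill : ∀ x y, φ c * homDefect φ x y = 0 := fun x y => by
    rw [homDefect, mul_sub, ← mul_assoc, ← (hmul c hc (x * y)).1, ← (hmul c hc x).1, ← mul_assoc,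
      (hmul (c * x) (C.mul_mem_right c x hc) y).1, sub_self]
  refine mem_sandwichAnnihilator.mpr ?_
  rintro _ ⟨⟨x, y⟩, rfl⟩ m
  exact ⟨by rw [mul_assoc, ← hcomm, ← mul_assoc, ← hcomm, hkill, zero_mul],
    by rw [hcomm, mul_assoc, hkill, mul_zero]⟩

lemma homPart_sup_antihomPart_eq_top (hφ : IsJordanHom φ) (hsurj : Function.Surjective φ)
    (hsp : IsSemiprimeRing R') (htf : ∀ a : R', a + a = 0 → a = 0) {C : TwoSidedIdeal R}
    (hsum : ∀ x : R, ∃ k ∈ commutatorIdeal R, ∃ c ∈ C, x = k + c)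
    (hC : ∀ c ∈ C, ∀ x, c * x = x * c) :
    homPart φ ⊔ antihomPart φ = ⊤ := by
  let L := comapOfMulMem (AddMonoidHom.mk' φ hφ.1) (homPart φ ⊔ antihomPart φ) fun u hu x => by
    simp only [AddMonoidHom.mk'_apply] at hu ⊢
    rw [← add_sub_cancel (φ x * φ u) (φ (x * u)), ← add_sub_cancel (φ u * φ x) (φ (u * x))]
    exact ⟨add_mem (mul_mem_left _ _ _ hu) (mem_sup_right (homDefect_mem_antihomPart φ x u)),
      add_mem (mul_mem_right _ _ _ hu) (mem_sup_right (homDefect_mem_antihomPart φ u x))⟩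
  have hK : commutatorIdeal R ≤ L := span_le.mpr fun _ ⟨x, y, hxy⟩ => by
    have h : φ (x * y - y * x) = antihomDefect φ x y - homDefect φ y x := by
      rw [hφ.map_sub, antihomDefect, homDefect]; abel
    rw [SetLike.mem_coe, mem_comapOfMulMem, AddMonoidHom.mk'_apply, hxy, h]
    exact sub_mem (mem_sup_left (hφ.antihomDefect_mem_homPart hsurj hsp htf x y))
      (mem_sup_right (homDefect_mem_antihomPart φ y x))
  have hCL : C ≤ L := fun c hc =>
    mem_comapOfMulMem.mpr (mem_sup_left (hφ.map_mem_homPart_of_central hsurj hsp htf hC hc))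
  refine eq_top_iff.mpr fun a _ => ?_
  obtain ⟨x, rfl⟩ := hsurj a
  obtain ⟨k, hk, c, hc, rfl⟩ := hsum x
  exact mem_comapOfMulMem.mp (L.add_mem (hK hk) (hCL hc))

end IsJordanHom

section Assembly

variable {R R' : Type*} [NonUnitalRing R] [NonUnitalRing R']

lemma mul_comm_of_mem_of_commutatorIdeal_inf_eq_bot {C : TwoSidedIdeal R}
    (hdisj : commutatorIdeal R ⊓ C = ⊥) {c : R} (hc : c ∈ C) (x : R) : c * x = x * c := by
  have h : c * x - x * c ∈ commutatorIdeal R ⊓ C :=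
    (mem_inf _).mpr ⟨subset_span ⟨c, x, rfl⟩, C.sub_mem (C.mul_mem_right c x hc)
      (C.mul_mem_left x c hc)⟩
  rw [hdisj, mem_bot] at h
  exact sub_eq_zero.mp h

lemma isDirectSumHomAntihomOn_top {φ : R →+ R'} (hsurj : Function.Surjective φ)
    {J₁ J₂ : TwoSidedIdeal R'} (hdisj : J₁ ⊓ J₂ = ⊥) (hsup : J₁ ⊔ J₂ = ⊤)
    (hmul₁ : ∀ u, φ u ∈ J₁ → ∀ x, φ (u * x) = φ u * φ x ∧ φ (x * u) = φ x * φ u)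
    (hmul₂ : ∀ u, φ u ∈ J₂ → ∀ x, φ (u * x) = φ x * φ u ∧ φ (x * u) = φ u * φ x) :
    IsDirectSumHomAntihomOn φ ⊤ ⊤ := by
  have hJ₁ : ∀ u, φ u ∈ J₁ → ∀ x, φ (x * u) ∈ J₁ ∧ φ (u * x) ∈ J₁ := fun u hu x => by
    rw [(hmul₁ u hu x).1, (hmul₁ u hu x).2]
    exact ⟨J₁.mul_mem_left _ _ hu, J₁.mul_mem_right _ _ hu⟩
  have hJ₂ : ∀ u, φ u ∈ J₂ → ∀ x, φ (x * u) ∈ J₂ ∧ φ (u * x) ∈ J₂ := fun u hu x => by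
    rw [(hmul₂ u hu x).1, (hmul₂ u hu x).2]
    exact ⟨J₂.mul_mem_right _ _ hu, J₂.mul_mem_left _ _ hu⟩
  have hdecomp : ∀ a, ∃ b ∈ J₁, ∃ c ∈ J₂, a = b + c := fun a => by
    obtain ⟨b, hb, c, hc, h⟩ := mem_sup.mp (hsup ▸ mem_top _ : a ∈ J₁ ⊔ J₂)
    exact ⟨b, hb, c, hc, h.symm⟩
  have hker : ∀ {a}, a ∈ J₁ → a ∈ J₂ → a = 0 := fun h₁ h₂ =>
    (mem_bot _).mp (hdisj ▸ (mem_inf _).mpr ⟨h₁, h₂⟩)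
  refine ⟨comapOfMulMem φ J₁ hJ₁, comapOfMulMem φ J₂ hJ₂, fun u => ?_, fun u => ?_,
    ⟨J₁, J₂, ?_, ?_, hdisj, fun a => ⟨fun _ => hdecomp a, fun _ => mem_top _⟩⟩,
    fun u hu x => (hmul₁ u (mem_comapOfMulMem.mp hu) x).1,
    fun u hu x => (hmul₂ u (mem_comapOfMulMem.mp hu) x).1⟩
  · refine ⟨fun _ => ?_, fun _ => mem_top _⟩
    obtain ⟨b, hb, c, hc, h⟩ := hdecomp (φ u)
    obtain ⟨v, rfl⟩ := hsurj c
    refine ⟨u - v, mem_comapOfMulMem.mpr ?_, v, mem_comapOfMulMem.mpr hc,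
      (sub_add_cancel _ _).symm⟩
    rwa [map_sub, h, add_sub_cancel_right]
  · simp only [mem_comapOfMulMem, mem_top, and_true]
    exact ⟨fun ⟨h₁, h₂⟩ => hker h₁ h₂, fun h => ⟨h ▸ J₁.zero_mem, h ▸ J₂.zero_mem⟩⟩
  · rw [coe_comapOfMulMem, Set.image_preimage_eq _ hsurj]
  · rw [coe_comapOfMulMem, Set.image_preimage_eq _ hsurj]

end Assembly

/-- If the commutator ideal `K` of `R` is a direct summand (there is an ideal `C`
with `K + C = R` and `K ∩ C = {0}`) and `R'` is a 2-torsion free semiprime ring,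
then every surjective Jordan homomorphism `φ : R → R'` is the direct sum of a
homomorphism and an antihomomorphism from the ideal `R` onto the ideal `R'`. -/
theorem surjective_jordanHom_directSum_of_commutatorIdeal_summand
    {R R' : Type*} [NonUnitalRing R] [NonUnitalRing R']
    (φ : R → R') (hφ : IsJordanHom φ) (hsurj : Function.Surjective φ)
    (C : TwoSidedIdeal R)
    (hsum : ∀ x : R, ∃ k ∈ commutatorIdeal R, ∃ c ∈ C, x = k + c)
    (hdisj : commutatorIdeal R ⊓ C = ⊥)
    (htf : ∀ a : R', a + a = 0 → a = 0) (hsp : IsSemiprimeRing R') :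
    IsDirectSumHomAntihomOn φ (⊤ : TwoSidedIdeal R) (⊤ : TwoSidedIdeal R') :=
  isDirectSumHomAntihomOn_top (φ := AddMonoidHom.mk' φ hφ.1) hsurj (homPart_inf_antihomPart hsp)
    (hφ.homPart_sup_antihomPart_eq_top hsurj hsp htf hsum
      fun _ hc => mul_comm_of_mem_of_commutatorIdeal_inf_eq_bot hdisj hc)
    (fun _ hu => hφ.map_mul_of_mem_homPart hsurj hsp htf hu)
    (fun _ hu => hφ.map_mul_of_mem_antihomPart hsurj hsp htf hu)
end

section
/- Let R be a 2-torsion free semiprime ring with commutator ideal K, and suppose one of the following holds: (a) K is an idempotent ideal (K² = K); (b) K is a semiprime ideal (for every ideal J of R, J² ⊆ K implies J ⊆ K); or (c) K equals the ideal L of R generated by all [[x,y],z] (x, y, z ∈ R). Then every Jordan automorphism φ of R (a bijective Jordan homomorphism from R to R) is the direct sum of a homomorphism and an antihomomorphism from the ideal K onto the ideal K. -/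
/-- The ideal of `A` generated by all double commutators `[[x,y],z]`. -/
def doubleCommutatorIdeal (A : Type*) [NonUnitalRing A] : TwoSidedIdeal A :=
  TwoSidedIdeal.span
    {w : A | ∃ x y z : A, w = (x * y - y * x) * z - z * (x * y - y * x)}

namespace JordanAux
variable {R : Type*} [NonUnitalRing R]
open TwoSidedIdeal


theorem span_ind {s : Set R} {p : R → Prop} {x : R} (hx : x ∈ TwoSidedIdeal.span s)
    (mem : ∀ c ∈ s, p c)
    (lmul : ∀ c ∈ s, ∀ r, p (r * c))
    (rmul : ∀ c ∈ s, ∀ t, p (c * t))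
    (lrmul : ∀ c ∈ s, ∀ r t, p (r * c * t))
    (zero : p 0) (add : ∀ a b, p a → p b → p (a + b)) (neg : ∀ a, p a → p (-a)) : p x := by
  rw [TwoSidedIdeal.mem_span_iff_mem_addSubgroup_closure_nonunital] at hx
  refine AddSubgroup.closure_induction (p := fun y _ => p y) ?_ zero (fun a b _ _ ha hb => add a b ha hb)
    (fun a _ ha => neg a ha) hx
  rintro y (((hy | hy) | hy) | hy)
  · exact mem y hy
  · obtain ⟨c, hc, r, -, rfl⟩ := hy
    exact rmul c hc r
  · obtain ⟨r, -, c, hc, rfl⟩ := hy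
    exact lmul c hc r
  · obtain ⟨rc, hrc, t, -, rfl⟩ := hy
    obtain ⟨r, -, c, hc, rfl⟩ := hrc
    exact lrmul c hc r t

theorem mem_inf' {I J : TwoSidedIdeal R} {x : R} : x ∈ I ⊓ J ↔ x ∈ I ∧ x ∈ J := Iff.rfl

theorem span_le' {s : Set R} {I : TwoSidedIdeal R} (h : s ⊆ I) : TwoSidedIdeal.span s ≤ I :=
  fun _ hx => mem_span_iff.mp hx I h

theorem span_mul_span_mem (M : TwoSidedIdeal R) (S T : Set R)
    (h1 : ∀ c ∈ S, ∀ d ∈ T, c * d ∈ M)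
    (h2 : ∀ c ∈ S, ∀ d ∈ T, ∀ m, c * m * d ∈ M) :
    ∀ u ∈ TwoSidedIdeal.span S, ∀ v ∈ TwoSidedIdeal.span T,
      u * v ∈ M ∧ ∀ m, u * m * v ∈ M := by
  have inner : ∀ c ∈ S, ∀ v ∈ TwoSidedIdeal.span T, c * v ∈ M ∧ ∀ m, c * m * v ∈ M := by
    intro c hc v hv
    refine span_ind (p := fun v => c * v ∈ M ∧ ∀ m, c * m * v ∈ M) hv ?_ ?_ ?_ ?_ ?_ ?_ ?_
    · exact fun d hd => ⟨h1 c hc d hd, h2 c hc d hd⟩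
    · intro d hd r
      refine ⟨?_, fun m => ?_⟩
      · have := h2 c hc d hd r
        rwa [show c * (r * d) = c * r * d by noncomm_ring]
      · have := h2 c hc d hd (m * r)
        rwa [show c * m * (r * d) = c * (m * r) * d by noncomm_ring]
    · intro d hd t
      refine ⟨?_, fun m => ?_⟩
      · have := M.mul_mem_right (c * d) t (h1 c hc d hd)
        rwa [show c * (d * t) = c * d * t by noncomm_ring]
      · have := M.mul_mem_right (c * m * d) t (h2 c hc d hd m)
        rwa [show c * m * (d * t) = c * m * d * t by noncomm_ring]
    · intro d hd r t
      refine ⟨?_, fun m => ?_⟩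
      · have := M.mul_mem_right (c * r * d) t (h2 c hc d hd r)
        rwa [show c * (r * d * t) = c * r * d * t by noncomm_ring]
      · have := M.mul_mem_right (c * (m * r) * d) t (h2 c hc d hd (m * r))
        rwa [show c * m * (r * d * t) = c * (m * r) * d * t by noncomm_ring]
    · exact ⟨by simpa using M.zero_mem, fun m => by simpa using M.zero_mem⟩
    · intro a b ha hb
      refine ⟨?_, fun m => ?_⟩
      · have := M.add_mem ha.1 hb.1
        rwa [show c * (a + b) = c * a + c * b by noncomm_ring]
      · have := M.add_mem (ha.2 m) (hb.2 m)
        rwa [show c * m * (a + b) = c * m * a + c * m * b by noncomm_ring]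
    · intro a ha
      refine ⟨?_, fun m => ?_⟩
      · have := M.neg_mem ha.1
        rwa [show c * -a = -(c * a) by noncomm_ring]
      · have := M.neg_mem (ha.2 m)
        rwa [show c * m * -a = -(c * m * a) by noncomm_ring]
  intro u hu
  refine span_ind (p := fun u => ∀ v ∈ TwoSidedIdeal.span T, u * v ∈ M ∧ ∀ m, u * m * v ∈ M)
    hu ?_ ?_ ?_ ?_ ?_ ?_ ?_
  · exact fun c hc v hv => inner c hc v hv
  · intro c hc r v hv
    refine ⟨?_, fun m => ?_⟩
    · have := M.mul_mem_left r _ ((inner c hc v hv).1)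
      rwa [show r * c * v = r * (c * v) by noncomm_ring]
    · have := M.mul_mem_left r _ ((inner c hc v hv).2 m)
      rwa [show r * c * m * v = r * (c * m * v) by noncomm_ring]
  · intro c hc t v hv
    refine ⟨(inner c hc v hv).2 t, fun m => ?_⟩
    · have := (inner c hc v hv).2 (t * m)
      rwa [show c * t * m * v = c * (t * m) * v by noncomm_ring]
  · intro c hc r t v hv
    refine ⟨?_, fun m => ?_⟩
    · have := M.mul_mem_left r _ ((inner c hc v hv).2 t)
      rwa [show r * c * t * v = r * (c * t * v) by noncomm_ring]
    · have := M.mul_mem_left r _ ((inner c hc v hv).2 (t * m))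
      rwa [show r * c * t * m * v = r * (c * (t * m) * v) by noncomm_ring]
  · exact fun v hv => ⟨by simpa using M.zero_mem, fun m => by simpa using M.zero_mem⟩
  · intro a b ha hb v hv
    refine ⟨?_, fun m => ?_⟩
    · have := M.add_mem ((ha v hv).1) ((hb v hv).1)
      rwa [show (a + b) * v = a * v + b * v by noncomm_ring]
    · have := M.add_mem ((ha v hv).2 m) ((hb v hv).2 m)
      rwa [show (a + b) * m * v = a * m * v + b * m * v by noncomm_ring]
  · intro a ha v hv
    refine ⟨?_, fun m => ?_⟩
    · have := M.neg_mem ((ha v hv).1)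
      rwa [show -a * v = -(a * v) by noncomm_ring]
    · have := M.neg_mem ((ha v hv).2 m)
      rwa [show -a * m * v = -(a * m * v) by noncomm_ring]

section semiprime
variable (hsp : IsSemiprimeRing R)
include hsp

theorem sp_sq {g : R} (h1 : ∀ m, g * m * g = 0) (h2 : g * g = 0) : g = 0 := by
  have hz : ∀ x ∈ TwoSidedIdeal.span {g}, ∀ y ∈ TwoSidedIdeal.span {g}, x * y = 0 := by
    intro x hx y hy
    have := (span_mul_span_mem ⊥ {g} {g}
      (by rintro c rfl d rfl; rw [TwoSidedIdeal.mem_bot]; exact h2)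
      (by rintro c rfl d rfl m; rw [TwoSidedIdeal.mem_bot]; exact h1 m) x hx y hy).1
    rwa [TwoSidedIdeal.mem_bot] at this
  have hb := hsp _ hz
  have hg : g ∈ TwoSidedIdeal.span {g} := subset_span rfl
  rwa [hb, TwoSidedIdeal.mem_bot] at hg

theorem sp1 {a : R} (h : ∀ r, a * r * a = 0) : a = 0 := by
  have haa : a * a = 0 := by
    refine sp_sq hsp (fun m => ?_) ?_
    · rw [show a * a * m * (a * a) = a * (a * m * a) * a by noncomm_ring]
      exact h _
    · rw [show a * a * (a * a) = a * (a * a) * a by noncomm_ring]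
      exact h _
  exact sp_sq hsp h haa

theorem sp_rev {a b : R} (h : ∀ r, a * r * b = 0) : ∀ r, b * r * a = 0 := by
  intro r
  refine sp1 hsp (fun s => ?_)
  rw [show b * r * a * s * (b * r * a) = b * r * (a * s * b) * r * a by noncomm_ring, h s]
  noncomm_ring

theorem sp_nomid {a b : R} (h : ∀ r, a * r * b = 0) : a * b = 0 := by
  have hrev := sp_rev hsp h
  refine sp1 hsp (fun s => ?_)
  rw [show a * b * s * (a * b) = a * (b * s * a) * b by noncomm_ring, hrev s]
  noncomm_ring

theorem relzero (htf : ∀ x : R, x + x = 0 → x = 0) {a b : R}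
    (h : ∀ m, a * m * b + b * m * a = 0) : ∀ r, a * r * b = 0 := by
  intro r
  refine sp1 hsp (fun y => ?_)
  refine htf _ ?_
  linear_combination (norm := noncomm_ring) h (r*b*y*a*r) - h (r*b*y) * (r*a) + (a*r*b*y) * h r

end semiprime

section jordan
variable {φ : R → R}
  (hadd : ∀ x y, φ (x + y) = φ x + φ y)
  (hsq : ∀ x, φ (x * x) = φ x * φ x)
  (htri : ∀ x y, φ (x * y * x) = φ x * φ y * φ x)

/-- `ε(x,y) = φ(xy) − φ(x)φ(y)` -/
def eps (φ : R → R) (x y : R) : R := φ (x * y) - φ x * φ y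
/-- `δ(x,y) = φ(xy) − φ(y)φ(x)` -/
def del (φ : R → R) (x y : R) : R := φ (x * y) - φ y * φ x

include hadd

theorem phi_zero : φ 0 = 0 := by
  have h := hadd 0 0
  rw [add_zero] at h
  exact (left_eq_add.mp h)

theorem phi_neg : ∀ x, φ (-x) = -φ x := by
  intro x
  have h := hadd x (-x)
  rw [add_neg_cancel, phi_zero hadd] at h
  exact (neg_eq_of_add_eq_zero_right h.symm).symm

theorem phi_sub : ∀ x y, φ (x - y) = φ x - φ y := by
  intro x y
  rw [sub_eq_add_neg, hadd, phi_neg hadd, sub_eq_add_neg]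

include hsq in
theorem lin_sq : ∀ x y, φ (x * y + y * x) = φ x * φ y + φ y * φ x := by
  intro x y
  have h := hsq (x + y)
  rw [show (x+y)*(x+y) = x*x + (x*y + y*x) + y*y by noncomm_ring,
    hadd (x*x + (x*y + y*x)) (y*y), hadd (x*x) (x*y + y*x), hsq x, hsq y, hadd x y] at h
  linear_combination (norm := noncomm_ring) h

include htri in
theorem lin_tri : ∀ x w y, φ (x * w * y + y * w * x) = φ x * φ w * φ y + φ y * φ w * φ x := by
  intro x w y
  have h := htri (x + y) w
  rw [show (x+y)*w*(x+y) = x*w*x + (x*w*y + y*w*x) + y*w*y by noncomm_ring,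
    hadd (x*w*x + (x*w*y + y*w*x)) (y*w*y), hadd (x*w*x) (x*w*y + y*w*x),
    htri x w, htri y w, hadd x y] at h
  linear_combination (norm := noncomm_ring) h

include hsq htri in
theorem key0 : ∀ x y w, eps φ x y * φ w * del φ x y + del φ x y * φ w * eps φ x y = 0 := by
  intro x y w
  have hBC : φ x * φ y + φ y * φ x = φ (x*y) + φ (y*x) := by
    rw [← lin_sq hadd hsq x y, hadd]
  have hD : φ (y*x) = φ x * φ y + φ y * φ x - φ (x*y) := by
    linear_combination (norm := noncomm_ring) -hBC
  have hI : φ (x*y) * φ w * φ (y*x) + φ (y*x) * φ w * φ (x*y)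
      = φ x * (φ y * φ w * φ y) * φ x + φ y * (φ x * φ w * φ x) * φ y := by
    have l1 := lin_tri hadd htri (x*y) w (y*x)
    have l2 : φ (x*(y*w*y)*x + y*(x*w*x)*y)
        = φ x * (φ y * φ w * φ y) * φ x + φ y * (φ x * φ w * φ x) * φ y := by
      rw [hadd (x*(y*w*y)*x) (y*(x*w*x)*y), htri x (y*w*y), htri y (x*w*x), htri y w, htri x w]
    have e : x*y*w*(y*x) + y*x*w*(x*y) = x*(y*w*y)*x + y*(x*w*x)*y := by noncomm_ring
    rw [← e, l1] at l2
    exact l2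
  rw [hD] at hI
  rw [eps, del]
  linear_combination (norm := noncomm_ring) -hI

end jordan

section addl
variable {φ : R → R} (hadd : ∀ x y, φ (x + y) = φ x + φ y)
include hadd

theorem eps_add_left (x u y : R) : eps φ (x + u) y = eps φ x y + eps φ u y := by
  simp only [eps]
  rw [show (x + u) * y = x * y + u * y by noncomm_ring, hadd (x*y) (u*y), hadd x u]
  noncomm_ring

theorem eps_add_right (x y v : R) : eps φ x (y + v) = eps φ x y + eps φ x v := by
  simp only [eps]
  rw [show x * (y + v) = x * y + x * v by noncomm_ring, hadd (x*y) (x*v), hadd y v]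
  noncomm_ring

theorem del_add_left (x u y : R) : del φ (x + u) y = del φ x y + del φ u y := by
  simp only [del]
  rw [show (x + u) * y = x * y + u * y by noncomm_ring, hadd (x*y) (u*y), hadd x u]
  noncomm_ring

theorem del_add_right (x y v : R) : del φ x (y + v) = del φ x y + del φ x v := by
  simp only [del]
  rw [show x * (y + v) = x * y + x * v by noncomm_ring, hadd (x*y) (x*v), hadd y v]
  noncomm_ring

end addl

section ortho
variable {φ : R → R}
  (hadd : ∀ x y, φ (x + y) = φ x + φ y)
  (hsq : ∀ x, φ (x * x) = φ x * φ x)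
  (htri : ∀ x y, φ (x * y * x) = φ x * φ y * φ x)
  (hsurj : Function.Surjective φ)
  (hsp : IsSemiprimeRing R)
  (htf : ∀ x : R, x + x = 0 → x = 0)
include hadd hsq htri hsurj hsp htf

theorem key1 : ∀ x y r, eps φ x y * r * del φ x y + del φ x y * r * eps φ x y = 0 := by
  intro x y r
  obtain ⟨w, rfl⟩ := hsurj r
  exact key0 hadd hsq htri x y w

theorem e_same : ∀ x y r, eps φ x y * r * del φ x y = 0 := fun x y =>
  relzero hsp htf (fun m => key1 hadd hsq htri hsurj hsp htf x y m)

theorem rev_same : ∀ x y r, del φ x y * r * eps φ x y = 0 := fun x y =>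
  sp_rev hsp (e_same hadd hsq htri hsurj hsp htf x y)

theorem e_half : ∀ x u y r, eps φ x y * r * del φ u y = 0 := by
  intro x u y
  have hrel : ∀ m, eps φ x y * m * del φ u y + eps φ u y * m * del φ x y = 0 := by
    intro m
    have h := e_same hadd hsq htri hsurj hsp htf (x + u) y m
    rw [eps_add_left hadd, del_add_left hadd] at h
    linear_combination (norm := noncomm_ring) h - e_same hadd hsq htri hsurj hsp htf x y m
      - e_same hadd hsq htri hsurj hsp htf u y m
  intro r
  refine sp1 hsp (fun s => ?_)
  linear_combination (norm := noncomm_ring)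
    (eps φ x y * r * del φ u y * s) * hrel r
    - (eps φ x y * r) * (rev_same hadd hsq htri hsurj hsp htf u y s) * (r * del φ x y)

theorem rev_half : ∀ x u y r, del φ u y * r * eps φ x y = 0 := fun x u y =>
  sp_rev hsp (e_half hadd hsq htri hsurj hsp htf x u y)

theorem e_full : ∀ x y u v r, eps φ x y * r * del φ u v = 0 := by
  intro x y u v
  have hrel : ∀ m, eps φ x y * m * del φ u v + eps φ x v * m * del φ u y = 0 := by
    intro m
    have h := e_half hadd hsq htri hsurj hsp htf x u (y + v) m
    rw [eps_add_right hadd, del_add_right hadd] at h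
    linear_combination (norm := noncomm_ring) h - e_half hadd hsq htri hsurj hsp htf x u y m
      - e_half hadd hsq htri hsurj hsp htf x u v m
  intro r
  refine sp1 hsp (fun s => ?_)
  linear_combination (norm := noncomm_ring)
    (eps φ x y * r * del φ u v * s) * hrel r
    - (eps φ x y * r) * (rev_half hadd hsq htri hsurj hsp htf x u v s) * (r * del φ u y)

theorem rev_full : ∀ x y u v r, del φ u v * r * eps φ x y = 0 := fun x y u v =>
  sp_rev hsp (e_full hadd hsq htri hsurj hsp htf x y u v)

theorem e_mul : ∀ x y u v, eps φ x y * del φ u v = 0 := fun x y u v =>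
  sp_nomid hsp (e_full hadd hsq htri hsurj hsp htf x y u v)

theorem d_mul : ∀ x y u v, del φ u v * eps φ x y = 0 := fun x y u v =>
  sp_nomid hsp (rev_full hadd hsq htri hsurj hsp htf x y u v)

end ortho

section structural

/-- The set of all `ε(x,y)`. -/
def epsSet (φ : R → R) : Set R := {w | ∃ x y, w = eps φ x y}
/-- The set of all `δ(x,y)`. -/
def delSet (φ : R → R) : Set R := {w | ∃ x y, w = del φ x y}

theorem comm_mem (a b : R) : a * b - b * a ∈ commutatorIdeal R :=
  subset_span ⟨a, b, rfl⟩

variable {φ : R → R}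
  (hadd : ∀ x y, φ (x + y) = φ x + φ y)
  (hsq : ∀ x, φ (x * x) = φ x * φ x)
  (htri : ∀ x y, φ (x * y * x) = φ x * φ y * φ x)
  (hsurj : Function.Surjective φ)
  (hsp : IsSemiprimeRing R)
  (htf : ∀ x : R, x + x = 0 → x = 0)

include hadd hsq htri hsurj hsp htf

theorem UV_zero : ∀ u ∈ TwoSidedIdeal.span (epsSet φ), ∀ v ∈ TwoSidedIdeal.span (delSet φ),
    u * v = 0 ∧ ∀ m, u * m * v = 0 := by
  intro u hu v hv
  have h := span_mul_span_mem ⊥ (epsSet φ) (delSet φ)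
    (by rintro c ⟨x, y, rfl⟩ d ⟨p, q, rfl⟩
        rw [TwoSidedIdeal.mem_bot]
        exact e_mul hadd hsq htri hsurj hsp htf x y p q)
    (by rintro c ⟨x, y, rfl⟩ d ⟨p, q, rfl⟩ m
        rw [TwoSidedIdeal.mem_bot]
        exact e_full hadd hsq htri hsurj hsp htf x y p q m) u hu v hv
  exact ⟨by have := h.1; rwa [TwoSidedIdeal.mem_bot] at this,
    fun m => by have := h.2 m; rwa [TwoSidedIdeal.mem_bot] at this⟩

theorem UV_inter : ∀ w, w ∈ TwoSidedIdeal.span (epsSet φ) →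
    w ∈ TwoSidedIdeal.span (delSet φ) → w = 0 := by
  intro w h1 h2
  refine sp1 hsp (fun r => ?_)
  exact (UV_zero hadd hsq htri hsurj hsp htf w h1 w h2).2 r

theorem UU_memK : ∀ u ∈ TwoSidedIdeal.span (epsSet φ), ∀ u' ∈ TwoSidedIdeal.span (epsSet φ),
    u * u' ∈ commutatorIdeal R := by
  intro u hu u' hu'
  refine (span_mul_span_mem (commutatorIdeal R) (epsSet φ) (epsSet φ) ?_ ?_ u hu u' hu').1
  · rintro c ⟨x, y, rfl⟩ d ⟨p, q, rfl⟩
    have e : eps φ x y * eps φ p q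
        = eps φ x y * del φ p q - eps φ x y * (φ p * φ q - φ q * φ p) := by
      simp only [eps, del]; noncomm_ring
    rw [e, e_mul hadd hsq htri hsurj hsp htf x y p q, zero_sub]
    exact neg_mem ((commutatorIdeal R).mul_mem_left _ _ (comm_mem (φ p) (φ q)))
  · rintro c ⟨x, y, rfl⟩ d ⟨p, q, rfl⟩ m
    have e : eps φ x y * m * eps φ p q
        = eps φ x y * m * del φ p q - (eps φ x y * m) * (φ p * φ q - φ q * φ p) := by
      simp only [eps, del]; noncomm_ring
    rw [e, e_full hadd hsq htri hsurj hsp htf x y p q m, zero_sub]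
    exact neg_mem ((commutatorIdeal R).mul_mem_left _ _ (comm_mem (φ p) (φ q)))

theorem VV_memK : ∀ v ∈ TwoSidedIdeal.span (delSet φ), ∀ v' ∈ TwoSidedIdeal.span (delSet φ),
    v * v' ∈ commutatorIdeal R := by
  intro v hv v' hv'
  refine (span_mul_span_mem (commutatorIdeal R) (delSet φ) (delSet φ) ?_ ?_ v hv v' hv').1
  · rintro c ⟨x, y, rfl⟩ d ⟨p, q, rfl⟩
    have e : del φ x y * del φ p q
        = del φ x y * eps φ p q + del φ x y * (φ p * φ q - φ q * φ p) := by
      simp only [eps, del]; noncomm_ring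
    rw [e, d_mul hadd hsq htri hsurj hsp htf p q x y, zero_add]
    exact (commutatorIdeal R).mul_mem_left _ _ (comm_mem (φ p) (φ q))
  · rintro c ⟨x, y, rfl⟩ d ⟨p, q, rfl⟩ m
    have e : del φ x y * m * del φ p q
        = del φ x y * m * eps φ p q + (del φ x y * m) * (φ p * φ q - φ q * φ p) := by
      simp only [eps, del]; noncomm_ring
    rw [e, rev_full hadd hsq htri hsurj hsp htf p q x y m, zero_add]
    exact (commutatorIdeal R).mul_mem_left _ _ (comm_mem (φ p) (φ q))

omit hsq htri hsp htf in
theorem K_le_UV : commutatorIdeal R ≤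
    TwoSidedIdeal.span (epsSet φ) ⊔ TwoSidedIdeal.span (delSet φ) := by
  refine span_le' ?_
  rintro z ⟨a, b, rfl⟩
  obtain ⟨p, rfl⟩ := hsurj a
  obtain ⟨q, rfl⟩ := hsurj b
  refine TwoSidedIdeal.mem_sup.mpr ⟨-eps φ p q, neg_mem (subset_span ⟨p, q, rfl⟩),
    del φ p q, subset_span ⟨p, q, rfl⟩, ?_⟩
  simp only [eps, del]; noncomm_ring

theorem hM_of_cases
    (hK : (TwoSidedIdeal.span {z : R | ∃ a ∈ commutatorIdeal R, ∃ b ∈ commutatorIdeal R,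
            z = a * b} = commutatorIdeal R) ∨
          (∀ J : TwoSidedIdeal R, (∀ a ∈ J, ∀ b ∈ J, a * b ∈ commutatorIdeal R) →
            J ≤ commutatorIdeal R) ∨
          (commutatorIdeal R = doubleCommutatorIdeal R)) :
    commutatorIdeal R ≤ (TwoSidedIdeal.span (epsSet φ) ⊓ commutatorIdeal R)
      ⊔ (TwoSidedIdeal.span (delSet φ) ⊓ commutatorIdeal R) := by
  rcases hK with hKa | hKb | hKc
  · have h1 : TwoSidedIdeal.span {z : R | ∃ a ∈ commutatorIdeal R, ∃ b ∈ commutatorIdeal R,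
        z = a * b} ≤ (TwoSidedIdeal.span (epsSet φ) ⊓ commutatorIdeal R)
          ⊔ (TwoSidedIdeal.span (delSet φ) ⊓ commutatorIdeal R) := by
      refine span_le' ?_
      rintro z ⟨a, ha, b, hb, rfl⟩
      obtain ⟨u, hu, v, hv, huv⟩ := TwoSidedIdeal.mem_sup.mp
        (K_le_UV hadd hsurj ha)
      refine TwoSidedIdeal.mem_sup.mpr ⟨u * b,
        mem_inf'.mpr ⟨(TwoSidedIdeal.span (epsSet φ)).mul_mem_right _ _ hu,
          (commutatorIdeal R).mul_mem_left _ _ hb⟩, v * b,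
        mem_inf'.mpr ⟨(TwoSidedIdeal.span (delSet φ)).mul_mem_right _ _ hv,
          (commutatorIdeal R).mul_mem_left _ _ hb⟩, ?_⟩
      linear_combination (norm := noncomm_ring) huv * b
    rwa [hKa] at h1
  · have hUK : TwoSidedIdeal.span (epsSet φ) ≤ commutatorIdeal R :=
      hKb _ (fun a ha b hb => UU_memK hadd hsq htri hsurj hsp htf a ha b hb)
    have hVK : TwoSidedIdeal.span (delSet φ) ≤ commutatorIdeal R :=
      hKb _ (fun a ha b hb => VV_memK hadd hsq htri hsurj hsp htf a ha b hb)
    intro k hk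
    obtain ⟨u, hu, v, hv, huv⟩ := TwoSidedIdeal.mem_sup.mp (K_le_UV hadd hsurj hk)
    exact TwoSidedIdeal.mem_sup.mpr ⟨u, mem_inf'.mpr ⟨hu, hUK hu⟩, v,
      mem_inf'.mpr ⟨hv, hVK hv⟩, huv⟩
  · have h1 : doubleCommutatorIdeal R ≤ (TwoSidedIdeal.span (epsSet φ) ⊓ commutatorIdeal R)
        ⊔ (TwoSidedIdeal.span (delSet φ) ⊓ commutatorIdeal R) := by
      refine span_le' ?_
      rintro w ⟨x, y, z, rfl⟩
      obtain ⟨u, hu, v, hv, huv⟩ := TwoSidedIdeal.mem_sup.mp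
        (K_le_UV hadd hsurj (comm_mem x y))
      refine TwoSidedIdeal.mem_sup.mpr ⟨u * z - z * u,
        mem_inf'.mpr ⟨sub_mem ((TwoSidedIdeal.span (epsSet φ)).mul_mem_right _ _ hu)
          ((TwoSidedIdeal.span (epsSet φ)).mul_mem_left _ _ hu), comm_mem u z⟩,
        v * z - z * v,
        mem_inf'.mpr ⟨sub_mem ((TwoSidedIdeal.span (delSet φ)).mul_mem_right _ _ hv)
          ((TwoSidedIdeal.span (delSet φ)).mul_mem_left _ _ hv), comm_mem v z⟩, ?_⟩
      linear_combination (norm := noncomm_ring) huv * z - z * huv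
    rwa [← hKc] at h1

theorem eps_del_memK
    (hM : commutatorIdeal R ≤ (TwoSidedIdeal.span (epsSet φ) ⊓ commutatorIdeal R)
      ⊔ (TwoSidedIdeal.span (delSet φ) ⊓ commutatorIdeal R)) :
    ∀ x y, eps φ x y ∈ commutatorIdeal R ∧ del φ x y ∈ commutatorIdeal R := by
  intro x y
  have hpq : eps φ x y - del φ x y ∈ commutatorIdeal R := by
    have e : eps φ x y - del φ x y = φ y * φ x - φ x * φ y := by simp only [eps, del]; noncomm_ring
    rw [e]; exact comm_mem (φ y) (φ x)
  obtain ⟨u₀, hu₀, v₀, hv₀, hsum⟩ := TwoSidedIdeal.mem_sup.mp (hM hpq)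
  rw [mem_inf'] at hu₀ hv₀
  have hp : eps φ x y ∈ TwoSidedIdeal.span (epsSet φ) := subset_span ⟨x, y, rfl⟩
  have hq : del φ x y ∈ TwoSidedIdeal.span (delSet φ) := subset_span ⟨x, y, rfl⟩
  have e : eps φ x y - u₀ = del φ x y + v₀ := by
    linear_combination (norm := noncomm_ring) -hsum
  have hz : eps φ x y - u₀ = 0 := by
    refine UV_inter hadd hsq htri hsurj hsp htf _ (sub_mem hp hu₀.1) ?_
    rw [e]; exact add_mem hq hv₀.1
  constructor
  · rw [sub_eq_zero] at hz
    rw [hz]; exact hu₀.2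
  · have e2 : del φ x y = -v₀ := by
      linear_combination (norm := noncomm_ring) hz - e
    rw [e2]; exact neg_mem hv₀.2

omit htri hsurj hsp htf in
theorem phiD : ∀ x y : R, φ (y * x) = φ x * φ y + φ y * φ x - φ (x * y) := by
  intro x y
  have h := lin_sq hadd hsq x y
  rw [hadd (x * y) (y * x)] at h
  linear_combination (norm := noncomm_ring) h

omit htri hsurj hsp htf in
theorem phi_comm : ∀ x y : R, φ (x * y - y * x) = eps φ x y + del φ x y := by
  intro x y
  rw [phi_sub hadd (x * y) (y * x), phiD hadd hsq x y, eps, del]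
  noncomm_ring

omit hsurj hsp htf in
theorem phi_left : ∀ r x y : R,
    φ (r * (x * y - y * x)) = eps φ x y * φ r + φ r * del φ x y := by
  intro r x y
  have l1 := lin_sq hadd hsq r (x * y)
  rw [hadd (r * (x * y)) (x * y * r)] at l1
  have l2 := lin_tri hadd htri x y r
  rw [hadd (x * y * r) (r * y * x)] at l2
  have e3 : r * (x * y - y * x) = r * (x * y) - r * y * x := by noncomm_ring
  rw [e3, phi_sub hadd (r * (x * y)) (r * y * x), eps, del]
  linear_combination (norm := noncomm_ring) l1 - l2

omit hsurj hsp htf in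
theorem phi_right : ∀ s x y : R,
    φ ((x * y - y * x) * s) = del φ x y * φ s + φ s * eps φ x y := by
  intro s x y
  have l1 := lin_sq hadd hsq (y * x) s
  rw [hadd (y * x * s) (s * (y * x))] at l1
  have e0 : s * (y * x) = s * y * x := by noncomm_ring
  rw [e0, phiD hadd hsq x y] at l1
  have l2 := lin_tri hadd htri x y s
  rw [hadd (x * y * s) (s * y * x)] at l2
  have e3 : (x * y - y * x) * s = x * y * s - y * x * s := by noncomm_ring
  rw [e3, phi_sub hadd (x * y * s) (y * x * s), eps, del]
  linear_combination (norm := noncomm_ring) l2 - l1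

theorem phi_mapsK
    (hM : commutatorIdeal R ≤ (TwoSidedIdeal.span (epsSet φ) ⊓ commutatorIdeal R)
      ⊔ (TwoSidedIdeal.span (delSet φ) ⊓ commutatorIdeal R)) :
    ∀ k ∈ commutatorIdeal R, φ k ∈ commutatorIdeal R := by
  have heK : ∀ x y : R, eps φ x y ∈ commutatorIdeal R :=
    fun x y => (eps_del_memK hadd hsq htri hsurj hsp htf hM x y).1
  have hdK : ∀ x y : R, del φ x y ∈ commutatorIdeal R :=
    fun x y => (eps_del_memK hadd hsq htri hsurj hsp htf hM x y).2
  intro k hk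
  have hk' : k ∈ TwoSidedIdeal.span {z : R | ∃ x y : R, z = x * y - y * x} := hk
  refine span_ind (p := fun k => φ k ∈ commutatorIdeal R) hk' ?_ ?_ ?_ ?_ ?_ ?_ ?_
  · rintro c ⟨x, y, rfl⟩
    rw [phi_comm hadd hsq x y]
    exact add_mem (heK x y) (hdK x y)
  · rintro c ⟨x, y, rfl⟩ r
    rw [phi_left hadd hsq htri r x y]
    exact add_mem ((commutatorIdeal R).mul_mem_right _ _ (heK x y))
      ((commutatorIdeal R).mul_mem_left _ _ (hdK x y))
  · rintro c ⟨x, y, rfl⟩ t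
    rw [phi_right hadd hsq htri t x y]
    exact add_mem ((commutatorIdeal R).mul_mem_right _ _ (hdK x y))
      ((commutatorIdeal R).mul_mem_left _ _ (heK x y))
  · rintro c ⟨x, y, rfl⟩ r t
    have hrc : φ (r * (x * y - y * x)) ∈ commutatorIdeal R := by
      rw [phi_left hadd hsq htri r x y]
      exact add_mem ((commutatorIdeal R).mul_mem_right _ _ (heK x y))
        ((commutatorIdeal R).mul_mem_left _ _ (hdK x y))
    have htrc : φ (t * r * (x * y - y * x)) ∈ commutatorIdeal R := by
      rw [phi_left hadd hsq htri (t * r) x y]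
      exact add_mem ((commutatorIdeal R).mul_mem_right _ _ (heK x y))
        ((commutatorIdeal R).mul_mem_left _ _ (hdK x y))
    have l1 := lin_sq hadd hsq (r * (x * y - y * x)) t
    rw [hadd (r * (x * y - y * x) * t) (t * (r * (x * y - y * x)))] at l1
    have e0 : t * (r * (x * y - y * x)) = t * r * (x * y - y * x) := by noncomm_ring
    rw [e0] at l1
    have e1 : φ (r * (x * y - y * x) * t)
        = φ (r * (x * y - y * x)) * φ t + φ t * φ (r * (x * y - y * x))
          - φ (t * r * (x * y - y * x)) := by
      linear_combination (norm := noncomm_ring) l1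
    rw [e1]
    exact sub_mem (add_mem ((commutatorIdeal R).mul_mem_right _ _ hrc)
      ((commutatorIdeal R).mul_mem_left _ _ hrc)) htrc
  · show φ 0 ∈ commutatorIdeal R
    rw [phi_zero hadd]; exact (commutatorIdeal R).zero_mem
  · intro a b ha hb
    show φ (a + b) ∈ commutatorIdeal R
    rw [hadd a b]; exact add_mem ha hb
  · intro a ha
    show φ (-a) ∈ commutatorIdeal R
    rw [phi_neg hadd a]; exact neg_mem ha

theorem hom_of_V : ∀ p, φ p ∈ TwoSidedIdeal.span (delSet φ) →
    ∀ x, φ (p * x) = φ p * φ x ∧ φ (x * p) = φ x * φ p := by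
  intro p hp x
  constructor
  · have h1 : eps φ p x ∈ TwoSidedIdeal.span (delSet φ) := by
      have e : eps φ p x = del φ p x - (φ p * φ x - φ x * φ p) := by
        simp only [eps, del]; noncomm_ring
      rw [e]
      exact sub_mem (subset_span ⟨p, x, rfl⟩)
        (sub_mem ((TwoSidedIdeal.span (delSet φ)).mul_mem_right _ _ hp)
          ((TwoSidedIdeal.span (delSet φ)).mul_mem_left _ _ hp))
    have h2 : eps φ p x = 0 :=
      UV_inter hadd hsq htri hsurj hsp htf _ (subset_span ⟨p, x, rfl⟩) h1
    rw [eps, sub_eq_zero] at h2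
    exact h2
  · have h1 : eps φ x p ∈ TwoSidedIdeal.span (delSet φ) := by
      have e : eps φ x p = del φ x p - (φ x * φ p - φ p * φ x) := by
        simp only [eps, del]; noncomm_ring
      rw [e]
      exact sub_mem (subset_span ⟨x, p, rfl⟩)
        (sub_mem ((TwoSidedIdeal.span (delSet φ)).mul_mem_left _ _ hp)
          ((TwoSidedIdeal.span (delSet φ)).mul_mem_right _ _ hp))
    have h2 : eps φ x p = 0 :=
      UV_inter hadd hsq htri hsurj hsp htf _ (subset_span ⟨x, p, rfl⟩) h1
    rw [eps, sub_eq_zero] at h2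
    exact h2

theorem anti_of_U : ∀ p, φ p ∈ TwoSidedIdeal.span (epsSet φ) →
    ∀ x, φ (p * x) = φ x * φ p ∧ φ (x * p) = φ p * φ x := by
  intro p hp x
  constructor
  · have h1 : del φ p x ∈ TwoSidedIdeal.span (epsSet φ) := by
      have e : del φ p x = eps φ p x + (φ p * φ x - φ x * φ p) := by
        simp only [eps, del]; noncomm_ring
      rw [e]
      exact add_mem (subset_span ⟨p, x, rfl⟩)
        (sub_mem ((TwoSidedIdeal.span (epsSet φ)).mul_mem_right _ _ hp)
          ((TwoSidedIdeal.span (epsSet φ)).mul_mem_left _ _ hp))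
    have h2 : del φ p x = 0 :=
      UV_inter hadd hsq htri hsurj hsp htf _ h1 (subset_span ⟨p, x, rfl⟩)
    rw [del, sub_eq_zero] at h2
    exact h2
  · have h1 : del φ x p ∈ TwoSidedIdeal.span (epsSet φ) := by
      have e : del φ x p = eps φ x p + (φ x * φ p - φ p * φ x) := by
        simp only [eps, del]; noncomm_ring
      rw [e]
      exact add_mem (subset_span ⟨x, p, rfl⟩)
        (sub_mem ((TwoSidedIdeal.span (epsSet φ)).mul_mem_left _ _ hp)
          ((TwoSidedIdeal.span (epsSet φ)).mul_mem_right _ _ hp))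
    have h2 : del φ x p = 0 :=
      UV_inter hadd hsq htri hsurj hsp htf _ h1 (subset_span ⟨x, p, rfl⟩)
    rw [del, sub_eq_zero] at h2
    exact h2

end structural

end JordanAux

open TwoSidedIdeal JordanAux in
/-- Let `R` be a 2-torsion free semiprime ring whose commutator ideal `K` is
idempotent (`K² = K`), or is a semiprime ideal, or coincides with the ideal `L`
generated by all `[[x,y],z]`.  Then every Jordan automorphism of `R` is the direct
sum of a homomorphism and an antihomomorphism from `K` onto `K`. -/
theorem jordanAut_directSum_on_commutatorIdeal
    {R : Type*} [NonUnitalRing R]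
    (htf : ∀ x : R, x + x = 0 → x = 0) (hsp : IsSemiprimeRing R)
    (hK : (TwoSidedIdeal.span {z : R | ∃ a ∈ commutatorIdeal R, ∃ b ∈ commutatorIdeal R,
            z = a * b} = commutatorIdeal R) ∨
          (∀ J : TwoSidedIdeal R, (∀ a ∈ J, ∀ b ∈ J, a * b ∈ commutatorIdeal R) →
            J ≤ commutatorIdeal R) ∨
          (commutatorIdeal R = doubleCommutatorIdeal R))
    (φ : R → R) (hφ : IsJordanHom φ) (hbij : Function.Bijective φ) :
    IsDirectSumHomAntihomOn φ (commutatorIdeal R) (commutatorIdeal R) := by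
  obtain ⟨hadd, hsq, htri⟩ := hφ
  have hsurj := hbij.2
  have hinj := hbij.1
  -- the inverse map
  let e := Equiv.ofBijective φ hbij
  let ψ : R → R := e.symm
  have hψφ : ∀ x, ψ (φ x) = x := fun x => e.symm_apply_apply x
  have hφψ : ∀ a, φ (ψ a) = a := fun a => e.apply_symm_apply a
  have hψadd : ∀ a b, ψ (a + b) = ψ a + ψ b := by
    intro a b; apply hinj
    rw [hφψ (a + b), hadd (ψ a) (ψ b), hφψ a, hφψ b]
  have hψsq : ∀ a, ψ (a * a) = ψ a * ψ a := by
    intro a; apply hinj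
    rw [hφψ (a * a), hsq (ψ a), hφψ a]
  have hψtri : ∀ a b, ψ (a * b * a) = ψ a * ψ b * ψ a := by
    intro a b; apply hinj
    rw [hφψ (a * b * a), htri (ψ a) (ψ b), hφψ a, hφψ b]
  have hψsurj : Function.Surjective ψ := fun x => ⟨φ x, hψφ x⟩
  -- structure data
  have hMφ := hM_of_cases hadd hsq htri hsurj hsp htf hK
  have hMψ := hM_of_cases hψadd hψsq hψtri hψsurj hsp htf hK
  have hφK : ∀ k ∈ commutatorIdeal R, φ k ∈ commutatorIdeal R :=
    phi_mapsK hadd hsq htri hsurj hsp htf hMφ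
  have hψK : ∀ k ∈ commutatorIdeal R, ψ k ∈ commutatorIdeal R :=
    phi_mapsK hψadd hψsq hψtri hψsurj hsp htf hMψ
  have hUK : TwoSidedIdeal.span (epsSet φ) ≤ commutatorIdeal R := by
    refine span_le' ?_
    rintro w ⟨x, y, rfl⟩
    exact (eps_del_memK hadd hsq htri hsurj hsp htf hMφ x y).1
  have hVK : TwoSidedIdeal.span (delSet φ) ≤ commutatorIdeal R := by
    refine span_le' ?_
    rintro w ⟨x, y, rfl⟩
    exact (eps_del_memK hadd hsq htri hsurj hsp htf hMφ x y).2
  have hhom := hom_of_V hadd hsq htri hsurj hsp htf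
  have hanti := anti_of_U hadd hsq htri hsurj hsp htf
  have hUVint := UV_inter hadd hsq htri hsurj hsp htf
  -- the two pre-image ideals
  have hz1 : (0 : R) ∈ {p : R | φ p ∈ TwoSidedIdeal.span (delSet φ)} := by
    show φ 0 ∈ TwoSidedIdeal.span (delSet φ)
    rw [phi_zero hadd]; exact (TwoSidedIdeal.span (delSet φ)).zero_mem
  have ha1 : ∀ {x y : R}, x ∈ {p : R | φ p ∈ TwoSidedIdeal.span (delSet φ)} →
      y ∈ {p : R | φ p ∈ TwoSidedIdeal.span (delSet φ)} →
      x + y ∈ {p : R | φ p ∈ TwoSidedIdeal.span (delSet φ)} := by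
    intro x y hx hy
    show φ (x + y) ∈ TwoSidedIdeal.span (delSet φ)
    rw [hadd x y]; exact add_mem hx hy
  have hn1 : ∀ {x : R}, x ∈ {p : R | φ p ∈ TwoSidedIdeal.span (delSet φ)} →
      -x ∈ {p : R | φ p ∈ TwoSidedIdeal.span (delSet φ)} := by
    intro x hx
    show φ (-x) ∈ TwoSidedIdeal.span (delSet φ)
    rw [phi_neg hadd x]; exact neg_mem hx
  have hl1 : ∀ {x y : R}, y ∈ {p : R | φ p ∈ TwoSidedIdeal.span (delSet φ)} →
      x * y ∈ {p : R | φ p ∈ TwoSidedIdeal.span (delSet φ)} := by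
    intro x y hy
    show φ (x * y) ∈ TwoSidedIdeal.span (delSet φ)
    rw [(hhom y hy x).2]
    exact (TwoSidedIdeal.span (delSet φ)).mul_mem_left _ _ hy
  have hr1 : ∀ {x y : R}, x ∈ {p : R | φ p ∈ TwoSidedIdeal.span (delSet φ)} →
      x * y ∈ {p : R | φ p ∈ TwoSidedIdeal.span (delSet φ)} := by
    intro x y hx
    show φ (x * y) ∈ TwoSidedIdeal.span (delSet φ)
    rw [(hhom x hx y).1]
    exact (TwoSidedIdeal.span (delSet φ)).mul_mem_right _ _ hx
  have hz2 : (0 : R) ∈ {p : R | φ p ∈ TwoSidedIdeal.span (epsSet φ)} := by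
    show φ 0 ∈ TwoSidedIdeal.span (epsSet φ)
    rw [phi_zero hadd]; exact (TwoSidedIdeal.span (epsSet φ)).zero_mem
  have ha2 : ∀ {x y : R}, x ∈ {p : R | φ p ∈ TwoSidedIdeal.span (epsSet φ)} →
      y ∈ {p : R | φ p ∈ TwoSidedIdeal.span (epsSet φ)} →
      x + y ∈ {p : R | φ p ∈ TwoSidedIdeal.span (epsSet φ)} := by
    intro x y hx hy
    show φ (x + y) ∈ TwoSidedIdeal.span (epsSet φ)
    rw [hadd x y]; exact add_mem hx hy
  have hn2 : ∀ {x : R}, x ∈ {p : R | φ p ∈ TwoSidedIdeal.span (epsSet φ)} →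
      -x ∈ {p : R | φ p ∈ TwoSidedIdeal.span (epsSet φ)} := by
    intro x hx
    show φ (-x) ∈ TwoSidedIdeal.span (epsSet φ)
    rw [phi_neg hadd x]; exact neg_mem hx
  have hl2 : ∀ {x y : R}, y ∈ {p : R | φ p ∈ TwoSidedIdeal.span (epsSet φ)} →
      x * y ∈ {p : R | φ p ∈ TwoSidedIdeal.span (epsSet φ)} := by
    intro x y hy
    show φ (x * y) ∈ TwoSidedIdeal.span (epsSet φ)
    rw [(hanti y hy x).2]
    exact (TwoSidedIdeal.span (epsSet φ)).mul_mem_right _ _ hy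
  have hr2 : ∀ {x y : R}, x ∈ {p : R | φ p ∈ TwoSidedIdeal.span (epsSet φ)} →
      x * y ∈ {p : R | φ p ∈ TwoSidedIdeal.span (epsSet φ)} := by
    intro x y hx
    show φ (x * y) ∈ TwoSidedIdeal.span (epsSet φ)
    rw [(hanti x hx y).1]
    exact (TwoSidedIdeal.span (epsSet φ)).mul_mem_left _ _ hx
  refine ⟨TwoSidedIdeal.mk' _ hz1 ha1 hn1 hl1 hr1, TwoSidedIdeal.mk' _ hz2 ha2 hn2 hl2 hr2,
    ?_, ?_, ⟨TwoSidedIdeal.span (delSet φ), TwoSidedIdeal.span (epsSet φ), ?_, ?_, ?_, ?_⟩,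
    ?_, ?_⟩
  · -- K = I₁ + I₂
    intro u
    constructor
    · intro hu
      obtain ⟨a, ha, b, hb, hab⟩ := TwoSidedIdeal.mem_sup.mp (hMφ (hφK u hu))
      rw [mem_inf'] at ha hb
      refine ⟨ψ b, ?_, u - ψ b, ?_, by abel⟩
      · rw [TwoSidedIdeal.mem_mk']
        show φ (ψ b) ∈ TwoSidedIdeal.span (delSet φ)
        rw [hφψ b]; exact hb.1
      · rw [TwoSidedIdeal.mem_mk']
        show φ (u - ψ b) ∈ TwoSidedIdeal.span (epsSet φ)
        rw [phi_sub hadd u (ψ b), hφψ b]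
        have hfu : φ u - b = a := by linear_combination (norm := noncomm_ring) -hab
        rw [hfu]; exact ha.1
    · rintro ⟨u₁, h1, u₂, h2, rfl⟩
      rw [TwoSidedIdeal.mem_mk'] at h1 h2
      have hu₁ : u₁ ∈ commutatorIdeal R := by
        have h3 := hψK _ (hVK h1)
        rwa [hψφ u₁] at h3
      have hu₂ : u₂ ∈ commutatorIdeal R := by
        have h3 := hψK _ (hUK h2)
        rwa [hψφ u₂] at h3
      exact add_mem hu₁ hu₂
  · -- I₁ ∩ I₂ = ker φ ∩ K
    intro u
    constructor
    · rintro ⟨h1, h2⟩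
      rw [TwoSidedIdeal.mem_mk'] at h1 h2
      have hz : φ u = 0 := hUVint (φ u) h2 h1
      refine ⟨hz, ?_⟩
      have h3 := hψK _ (hVK h1)
      rwa [hψφ u] at h3
    · rintro ⟨hz, hu⟩
      constructor <;> rw [TwoSidedIdeal.mem_mk']
      · show φ u ∈ TwoSidedIdeal.span (delSet φ)
        rw [hz]; exact (TwoSidedIdeal.span (delSet φ)).zero_mem
      · show φ u ∈ TwoSidedIdeal.span (epsSet φ)
        rw [hz]; exact (TwoSidedIdeal.span (epsSet φ)).zero_mem
  · -- V = φ '' I₁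
    refine Set.Subset.antisymm ?_ ?_
    · intro a ha
      refine ⟨ψ a, ?_, hφψ a⟩
      show ψ a ∈ TwoSidedIdeal.mk' _ hz1 ha1 hn1 hl1 hr1
      rw [TwoSidedIdeal.mem_mk']
      show φ (ψ a) ∈ TwoSidedIdeal.span (delSet φ)
      rw [hφψ a]; exact ha
    · rintro a ⟨p, hp, rfl⟩
      have hp' : p ∈ TwoSidedIdeal.mk' _ hz1 ha1 hn1 hl1 hr1 := hp
      rw [TwoSidedIdeal.mem_mk'] at hp'
      exact hp'
  · -- U = φ '' I₂
    refine Set.Subset.antisymm ?_ ?_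
    · intro a ha
      refine ⟨ψ a, ?_, hφψ a⟩
      show ψ a ∈ TwoSidedIdeal.mk' _ hz2 ha2 hn2 hl2 hr2
      rw [TwoSidedIdeal.mem_mk']
      show φ (ψ a) ∈ TwoSidedIdeal.span (epsSet φ)
      rw [hφψ a]; exact ha
    · rintro a ⟨p, hp, rfl⟩
      have hp' : p ∈ TwoSidedIdeal.mk' _ hz2 ha2 hn2 hl2 hr2 := hp
      rw [TwoSidedIdeal.mem_mk'] at hp'
      exact hp'
  · -- V ⊓ U = ⊥
    refine TwoSidedIdeal.ext (fun x => ?_)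
    constructor
    · intro h
      rw [mem_inf'] at h
      rw [TwoSidedIdeal.mem_bot]
      exact hUVint x h.2 h.1
    · intro h
      rw [TwoSidedIdeal.mem_bot] at h
      subst h
      exact mem_inf'.mpr ⟨(TwoSidedIdeal.span (delSet φ)).zero_mem,
        (TwoSidedIdeal.span (epsSet φ)).zero_mem⟩
  · -- K = V + U
    intro a
    constructor
    · intro ha
      obtain ⟨x, hx, y, hy, hxy⟩ := TwoSidedIdeal.mem_sup.mp (K_le_UV hadd hsurj ha)
      exact ⟨y, hy, x, hx, by linear_combination (norm := noncomm_ring) -hxy⟩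
    · rintro ⟨b, hb, c, hc, rfl⟩
      exact add_mem (hVK hb) (hUK hc)
  · -- homomorphism on I₁
    intro u₁ h1 x
    rw [TwoSidedIdeal.mem_mk'] at h1
    exact (hhom u₁ h1 x).1
  · -- antihomomorphism on I₂
    intro u₂ h2 x
    rw [TwoSidedIdeal.mem_mk'] at h2
    exact (hanti u₂ h2 x).1
end
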